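/- arXiv:1405.7132 — 7 statements merged into one kernel-verified Lean document; each statement's English description precedes it below -/
import Mathlib

section
/- Let g be a nonnegative real-valued multiplicative function and x ≥ 2. Define Δ = sup over 1 ≤ y ≤ x of y^{-1} ∑_{q ≤ y} g(q) log q, where q runs over prime powers. Then ∑_{2 ≤ n ≤ x} g(n) ≤ (x/log x + 10x/(log x)^2) · Δ · ∑_{n ≤ x} g(n)/n. -/
/-!
Write `(∑ g(n)) log x = ∑ g(n) log n + ∑ g(n) log (x/n)`. Splitting `log n` over the exact
prime-power divisors `q ∥ n` and substituting `n = q m` gives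
`∑_{2 ≤ n ≤ M} g(n) log n ≤ Δ M ∑_{m ≤ M} g(m)/m` for every `M ≤ x`, which bounds the first sum.
The second sum is `∑ g(n) log n · w(n)` with the decreasing weight `w(n) = log (x/n) / log n`, so
partial summation bounds it by the same constant times `2 w(2) + ∑_{2 < n ≤ x} w(n)`; splitting
this at `√x` and using `∑_{n ≤ x} log (x/n) ≤ x` shows it is at most `10 x / log x`.
-/

open Finset Real
open scoped Classical

lemma mul_log_eq_sum_primeFactors {g : ℕ → ℝ}
    (hgm : ∀ m n : ℕ, Nat.Coprime m n → g (m * n) = g m * g n) {n : ℕ} (hn : n ≠ 0) :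
    g n * log n =
      ∑ p ∈ n.primeFactors, g (ordProj[p] n) * log (ordProj[p] n : ℕ) * g (ordCompl[p] n) := by
  rw [log_nat_eq_sum_factorization, Finsupp.sum, Nat.support_factorization, mul_sum]
  refine sum_congr rfl fun p hp => ?_
  have hcop := (Nat.coprime_ordCompl (Nat.prime_of_mem_primeFactors hp) hn).pow_left
    (n.factorization p)
  have hsplit : g n = g (ordProj[p] n) * g (ordCompl[p] n) := by
    rw [← hgm _ _ hcop, Nat.ordProj_mul_ordCompl_eq_self]
  rw [hsplit, Nat.cast_pow, log_pow]
  ring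

lemma ordCompl_ordProj_injOn :
    Set.InjOn (fun z : (_ : ℕ) × ℕ => (⟨ordCompl[z.2] z.1, ordProj[z.2] z.1⟩ : (_ : ℕ) × ℕ))
      {z | z.2 ∈ z.1.primeFactors} := by
  rintro ⟨n, p⟩ hp ⟨n', p'⟩ hp' h
  simp only [Set.mem_ofPred_eq, Sigma.mk.injEq, heq_eq_eq] at hp hp' h
  obtain ⟨hcompl, hproj⟩ := h
  have hpp' : p = p' := by
    have hp_dvd : p ∣ ordProj[p'] n' :=
      hproj ▸ dvd_pow_self p (Finsupp.mem_support_iff.mp (by rwa [Nat.support_factorization]))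
    have hprime := Nat.prime_of_mem_primeFactors hp
    exact (Nat.prime_dvd_prime_iff_eq hprime (Nat.prime_of_mem_primeFactors hp')).mp
      (hprime.dvd_of_dvd_pow hp_dvd)
  subst hpp'
  have hnn' : n = n' := by
    rw [← Nat.ordProj_mul_ordCompl_eq_self n p, ← Nat.ordProj_mul_ordCompl_eq_self n' p,
      hcompl, hproj]
  rw [hnn']

lemma sum_mul_log_le_sum_mul_sum_primePow {g : ℕ → ℝ} (hg0 : ∀ n, 0 ≤ g n)
    (hgm : ∀ m n : ℕ, Nat.Coprime m n → g (m * n) = g m * g n) (M : ℕ) :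
    ∑ n ∈ Icc 2 M, g n * log n ≤
      ∑ m ∈ Icc 1 M, g m * ∑ q ∈ (range (M / m + 1)).filter IsPrimePow, g q * log q := by
  set F : (_ : ℕ) × ℕ → ℝ := fun y => g y.2 * log y.2 * g y.1
  set φ : (_ : ℕ) × ℕ → (_ : ℕ) × ℕ := fun z => ⟨ordCompl[z.2] z.1, ordProj[z.2] z.1⟩
  set σ := (Icc 2 M).sigma Nat.primeFactors
  set B := (Icc 1 M).sigma fun m => (range (M / m + 1)).filter IsPrimePow
  have hφ : ∀ z ∈ σ, φ z ∈ B := by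
    rintro ⟨n, p⟩ hz
    simp only [σ, B, φ, mem_sigma, mem_Icc, mem_filter, mem_range] at hz ⊢
    obtain ⟨⟨hn2, hnM⟩, hp⟩ := hz
    have hn0 : n ≠ 0 := by omega
    have hm1 : 1 ≤ ordCompl[p] n := Nat.ordCompl_pos p hn0
    have hprime := Nat.prime_of_mem_primeFactors hp
    refine ⟨⟨hm1, (Nat.ordCompl_le n p).trans hnM⟩, ?_, ?_⟩
    · rwa [Nat.lt_add_one_iff, Nat.le_div_iff_mul_le hm1, Nat.ordProj_mul_ordCompl_eq_self]
    · exact ⟨p, _, hprime.prime,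
        hprime.factorization_pos_of_dvd hn0 (Nat.dvd_of_mem_primeFactors hp), rfl⟩
  calc ∑ n ∈ Icc 2 M, g n * log n = ∑ z ∈ σ, F (φ z) := by
        rw [sum_sigma]
        exact sum_congr rfl fun n hn => mul_log_eq_sum_primeFactors hgm
          (by have := (mem_Icc.mp hn).1; omega)
    _ = ∑ y ∈ σ.image φ, F y :=
        (sum_image fun z hz z' hz' =>
          ordCompl_ordProj_injOn (mem_sigma.mp hz).2 (mem_sigma.mp hz').2).symm
    _ ≤ ∑ y ∈ B, F y := by
        refine sum_le_sum_of_subset_of_nonneg (image_subset_iff.mpr hφ) fun y hy _ => ?_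
        simp only [B, mem_sigma, mem_filter] at hy
        exact mul_nonneg (mul_nonneg (hg0 _) (log_natCast_nonneg _)) (hg0 _)
    _ = _ := by
        rw [sum_sigma]
        exact sum_congr rfl fun m _ => by rw [mul_sum]; exact sum_congr rfl fun q _ => by ring

lemma sum_mul_log_le_mul_sum_div {g : ℕ → ℝ} (hg0 : ∀ n, 0 ≤ g n)
    (hgm : ∀ m n : ℕ, Nat.Coprime m n → g (m * n) = g m * g n) {Δ : ℝ} {M : ℕ}
    (hΔ : ∀ y : ℝ, 1 ≤ y → y ≤ M →
      ∑ q ∈ (range (⌊y⌋₊ + 1)).filter IsPrimePow, g q * log q ≤ Δ * y) :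
    ∑ n ∈ Icc 2 M, g n * log n ≤ Δ * M * ∑ m ∈ Icc 1 M, g m / m := by
  refine (sum_mul_log_le_sum_mul_sum_primePow hg0 hgm M).trans ?_
  rw [mul_sum]
  refine sum_le_sum fun m hm => ?_
  have hm1 : (1 : ℝ) ≤ m := by exact_mod_cast (mem_Icc.mp hm).1
  have hmM : (m : ℝ) ≤ M := by exact_mod_cast (mem_Icc.mp hm).2
  have hy := hΔ (M / m) ((one_le_div (by linarith)).mpr hmM)
    (div_le_self (by linarith) hm1)
  rw [Nat.floor_div_natCast, Nat.floor_natCast] at hy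
  calc g m * ∑ q ∈ (range (M / m + 1)).filter IsPrimePow, g q * log q
      ≤ g m * (Δ * (M / m)) := mul_le_mul_of_nonneg_left hy (hg0 m)
    _ = Δ * M * (g m / m) := by ring

lemma sum_mul_log_le_mul_sum_div_of_le_floor {g : ℕ → ℝ} (hg0 : ∀ n, 0 ≤ g n)
    (hgm : ∀ m n : ℕ, Nat.Coprime m n → g (m * n) = g m * g n) {Δ x : ℝ} (hΔ0 : 0 ≤ Δ)
    (hΔ : ∀ y : ℝ, 1 ≤ y → y ≤ x →
      ∑ q ∈ (range (⌊y⌋₊ + 1)).filter IsPrimePow, g q * log q ≤ Δ * y)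
    {k : ℕ} (hk : k ≤ ⌊x⌋₊) :
    ∑ n ∈ Icc 2 k, g n * log n ≤ Δ * (∑ m ∈ Icc 1 ⌊x⌋₊, g m / m) * k := by
  rcases k.eq_zero_or_pos with rfl | hk0
  · simp
  have hkx : (k : ℝ) ≤ x := (Nat.le_floor_iff' hk0.ne').mp hk
  calc ∑ n ∈ Icc 2 k, g n * log n ≤ Δ * k * ∑ m ∈ Icc 1 k, g m / m :=
        sum_mul_log_le_mul_sum_div hg0 hgm fun y h1 h2 => hΔ y h1 (h2.trans hkx)
    _ ≤ Δ * k * ∑ m ∈ Icc 1 ⌊x⌋₊, g m / m :=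
        mul_le_mul_of_nonneg_left (sum_le_sum_of_subset_of_nonneg (Icc_subset_Icc_right hk)
          fun n _ _ => div_nonneg (hg0 n) n.cast_nonneg) (by positivity)
    _ = Δ * (∑ m ∈ Icc 1 ⌊x⌋₊, g m / m) * k := by ring

lemma sum_mul_le_of_sum_le_mul {a w : ℕ → ℝ} {C : ℝ} {m N : ℕ} (hmN : m ≤ N)
    (hA : ∀ k ∈ Icc m N, ∑ n ∈ Icc m k, a n ≤ C * k)
    (hw : AntitoneOn w (Set.Icc m N)) (hwN : 0 ≤ w N) :
    ∑ n ∈ Icc m N, a n * w n ≤ C * (m * w m + ∑ n ∈ Ioc m N, w n) := by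
  -- partial summation, carrying the slack `C k - ∑_{m ≤ n ≤ k} a n ≥ 0` along
  have key : ∀ k, m ≤ k → k ≤ N → ∑ n ∈ Icc m k, a n * w n ≤
      C * (m * w m + ∑ n ∈ Ioc m k, w n) - (C * k - ∑ n ∈ Icc m k, a n) * w k := by
    intro k hmk
    induction k, hmk using Nat.le_induction with
    | base => intro _; simp only [Icc_self, sum_singleton, Ioc_self, sum_empty]; linarith
    | succ k hmk ih =>
      intro hkN
      have hslack : 0 ≤ C * k - ∑ n ∈ Icc m k, a n :=
        sub_nonneg.mpr (hA k (mem_Icc.mpr ⟨hmk, by omega⟩))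
      have hwk : w (k + 1) ≤ w k :=
        hw ⟨hmk, by omega⟩ ⟨by omega, hkN⟩ (Nat.le_succ k)
      rw [sum_Icc_succ_top (by omega), sum_Icc_succ_top (by omega), sum_Ioc_succ_top hmk]
      push_cast
      linarith [ih (by omega), mul_le_mul_of_nonneg_left hwk hslack]
  have hslack : 0 ≤ C * N - ∑ n ∈ Icc m N, a n := sub_nonneg.mpr (hA N (mem_Icc.mpr ⟨hmN, le_rfl⟩))
  linarith [key N hmN le_rfl, mul_nonneg hslack hwN]

lemma log_div_natCast_nonneg {x : ℝ} {n : ℕ} (hn : n ≠ 0) (hnx : n ≤ ⌊x⌋₊) :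
    0 ≤ log (x / n) :=
  log_nonneg <| (one_le_div (by positivity)).mpr <| (Nat.le_floor_iff' hn).mp hnx

lemma antitoneOn_log_div_div_log (x : ℝ) :
    AntitoneOn (fun n : ℕ => log (x / n) / log n) (Set.Icc 2 ⌊x⌋₊) := by
  rintro a ⟨ha2, haN⟩ b ⟨hb2, hbN⟩ hab
  have ha0 : (0 : ℝ) < a := by positivity
  have hab' : (a : ℝ) ≤ b := by exact_mod_cast hab
  have hx0 : 0 < x := ha0.trans_le ((Nat.le_floor_iff' (by omega)).mp haN)
  refine div_le_div₀ (log_div_natCast_nonneg (by omega) haN) ?_ (log_pos ?_) (log_le_log ha0 hab')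
  · exact log_le_log (by positivity) (div_le_div_of_nonneg_left hx0.le ha0 hab')
  · exact_mod_cast ha2

lemma sum_Icc_log_natCast (N : ℕ) : ∑ n ∈ Icc 1 N, log n = log N.factorial := by
  rw [← prod_Ico_id_eq_factorial, Nat.cast_prod, log_prod]
  · rfl
  · intro n hn
    rw [mem_Ico] at hn
    exact_mod_cast (by omega : n ≠ 0)

lemma sum_Icc_log_div_le {x : ℝ} {N : ℕ} (hx : 0 ≤ x) (hN : (N : ℝ) ≤ x) :
    ∑ n ∈ Icc 1 N, log (x / n) ≤ x := by
  rcases N.eq_zero_or_pos with rfl | hN0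
  · simpa using hx
  have hN0' : (0 : ℝ) < N := by exact_mod_cast hN0
  have hx0 : 0 < x := hN0'.trans_le hN
  have hsum : ∑ n ∈ Icc 1 N, log (x / n) = N * log x - log N.factorial := by
    rw [← sum_Icc_log_natCast, sum_congr rfl fun n hn => log_div hx0.ne' (by
      exact_mod_cast Nat.one_le_iff_ne_zero.mp (mem_Icc.mp hn).1), sum_sub_distrib]
    simp
  have hfact : N * log N - N ≤ log N.factorial := by
    have h := pow_div_factorial_le_exp _ hN0'.le N
    rw [div_le_iff₀ (by positivity), ← log_le_log_iff (by positivity) (by positivity),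
      log_mul (by positivity) (by positivity), log_exp, log_pow] at h
    linarith
  have hratio : N * log (x / N) ≤ x - N := by
    have := log_le_sub_one_of_pos (div_pos hx0 hN0')
    calc (N : ℝ) * log (x / N) ≤ N * (x / N - 1) := mul_le_mul_of_nonneg_left this hN0'.le
      _ = x - N := by field_simp
  rw [log_div hx0.ne' hN0'.ne'] at hratio
  linarith

lemma sum_log_div_div_log_le {x : ℝ} (hx : 1 < x) :
    ∑ n ∈ Icc 2 ⌊x⌋₊, log (x / n) / log n ≤ log x / log 2 * √x + 2 / log x * x := by
  set L := log x
  set R := √x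
  have hx0 : 0 < x := by linarith
  have hL : 0 < L := log_pos hx
  have hlogR : log R = L / 2 := log_sqrt hx0.le
  rw [← sum_filter_add_sum_filter_not _ (fun n : ℕ => (n : ℝ) ≤ R)]
  gcongr ?_ + ?_
  · have hcard : (#((Icc 2 ⌊x⌋₊).filter fun n : ℕ => (n : ℝ) ≤ R) : ℝ) ≤ R := by
      calc (#((Icc 2 ⌊x⌋₊).filter fun n : ℕ => (n : ℝ) ≤ R) : ℝ) ≤ #(Icc 1 ⌊R⌋₊) := by
            gcongr
            intro n hn
            simp only [mem_filter, mem_Icc] at hn ⊢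
            exact ⟨by omega, Nat.le_floor hn.2⟩
        _ ≤ R := by simpa using Nat.floor_le (sqrt_nonneg x)
    calc ∑ n ∈ (Icc 2 ⌊x⌋₊).filter (fun n : ℕ => (n : ℝ) ≤ R), log (x / n) / log n
        ≤ ∑ n ∈ (Icc 2 ⌊x⌋₊).filter (fun n : ℕ => (n : ℝ) ≤ R), L / log 2 := by
          refine sum_le_sum fun n hn => ?_
          simp only [mem_filter, mem_Icc] at hn
          have hn2 : (2 : ℝ) ≤ n := by exact_mod_cast hn.1.1
          refine div_le_div₀ hL.le (log_le_log (by positivity) ?_) (log_pos one_lt_two)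
            (log_le_log two_pos hn2)
          exact div_le_self hx0.le (by linarith)
      _ ≤ L / log 2 * R := by
          rw [sum_const, nsmul_eq_mul, mul_comm]
          gcongr
  · calc ∑ n ∈ (Icc 2 ⌊x⌋₊).filter (fun n : ℕ => ¬(n : ℝ) ≤ R), log (x / n) / log n
        ≤ ∑ n ∈ (Icc 2 ⌊x⌋₊).filter (fun n : ℕ => ¬(n : ℝ) ≤ R), 2 / L * log (x / n) := by
          refine sum_le_sum fun n hn => ?_
          simp only [mem_filter, mem_Icc, not_le] at hn
          have hlogn : L / 2 ≤ log n := hlogR ▸ log_le_log (sqrt_pos.mpr hx0) hn.2.le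
          calc log (x / n) / log n ≤ log (x / n) / (L / 2) :=
                div_le_div_of_nonneg_left (log_div_natCast_nonneg (by omega) hn.1.2)
                  (by positivity) hlogn
            _ = 2 / L * log (x / n) := by field_simp
      _ ≤ ∑ n ∈ Icc 1 ⌊x⌋₊, 2 / L * log (x / n) := by
          refine sum_le_sum_of_subset_of_nonneg (fun n hn => ?_) fun n hn _ => ?_
          · simp only [mem_filter, mem_Icc] at hn ⊢; omega
          · simp only [mem_Icc] at hn
            exact mul_nonneg (by positivity) (log_div_natCast_nonneg (by omega) hn.2)
      _ ≤ 2 / L * x := by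
          rw [← mul_sum]
          exact mul_le_mul_of_nonneg_left (sum_Icc_log_div_le hx0.le (Nat.floor_le hx0.le))
            (by positivity)

lemma log_le_div_exp_one {t : ℝ} (ht : 0 < t) : log t ≤ t / exp 1 := by
  rw [le_div_iff₀ (exp_pos 1), mul_comm]
  simpa [exp_log ht] using exp_one_mul_le_exp (x := log t)

lemma log_sq_mul_one_add_sqrt_le {x : ℝ} (hx : 1 ≤ x) :
    log x ^ 2 * (1 + √x) ≤ 8 * log 2 * x := by
  -- `log t ≤ t / e` at `t = √x` and at `t = x ^ (1/4)`
  set s := √x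
  set t := √s
  have hs : 1 ≤ s := one_le_sqrt.mpr hx
  have ht : 1 ≤ t := one_le_sqrt.mpr hs
  have hss : s ^ 2 = x := sq_sqrt (by linarith)
  have htt : t ^ 2 = s := sq_sqrt (by linarith)
  have hlog_s : log x = 2 * log s := by rw [← hss, log_pow]; norm_num
  have hlog_t : log s = 2 * log t := by rw [← htt, log_pow]; norm_num
  have hs0 : 0 ≤ log s := log_nonneg hs
  have ht0 : 0 ≤ log t := log_nonneg ht
  have hes := log_le_div_exp_one (by linarith : 0 < s)
  have het := log_le_div_exp_one (by linarith : 0 < t)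
  have he : 2.7182818283 < exp 1 := exp_one_gt_d9
  have h2 : 0.6931471803 < log 2 := log_two_gt_d9
  set e := exp 1
  rw [le_div_iff₀ (by linarith)] at hes het
  have h1 : (log s * e) ^ 2 ≤ s ^ 2 := pow_le_pow_left₀ (by positivity) hes 2
  have h3 : (log t * e) ^ 2 ≤ t ^ 2 := pow_le_pow_left₀ (by positivity) het 2
  rw [hlog_t] at h1
  rw [htt] at h3
  have hA : (4 * log t) ^ 2 * (1 + s) * e ^ 2 ≤ 20 * s ^ 2 := by
    nlinarith [mul_le_mul_of_nonneg_right h3 (by linarith : (0:ℝ) ≤ s)]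
  have he2 : 7.38 ≤ e ^ 2 := by nlinarith
  have hA0 : 0 ≤ (4 * log t) ^ 2 * (1 + s) := by positivity
  rw [hlog_s, hlog_t, ← hss]
  nlinarith [mul_le_mul_of_nonneg_left he2 hA0]

lemma two_mul_add_sum_Ioc_log_div_div_log_le {x : ℝ} (hx : 2 ≤ x) :
    2 * (log (x / 2) / log 2) + ∑ n ∈ Ioc 2 ⌊x⌋₊, log (x / n) / log n ≤ 10 * x / log x := by
  have hx0 : 0 < x := by linarith
  have hL : 0 < log x := log_pos (by linarith)
  have hlog2 : 0 < log 2 := log_pos one_lt_two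
  have hw2 : log (x / 2) / log 2 ≤ log x / log 2 :=
    div_le_div_of_nonneg_right (log_le_log (by positivity) (by linarith)) hlog2.le
  have hsum := sum_log_div_div_log_le (by linarith : 1 < x)
  rw [Icc_eq_cons_Ioc (Nat.le_floor (by exact_mod_cast hx)), sum_cons] at hsum
  have hnum := log_sq_mul_one_add_sqrt_le (by linarith : 1 ≤ x)
  rw [le_div_iff₀ hL]
  calc (2 * (log (x / 2) / log 2) + ∑ n ∈ Ioc 2 ⌊x⌋₊, log (x / n) / log n) * log x
      ≤ (log x / log 2 * (1 + √x) + 2 / log x * x) * log x := by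
        refine mul_le_mul_of_nonneg_right ?_ hL.le
        push_cast at hsum
        linarith
    _ = log x ^ 2 * (1 + √x) / log 2 + 2 * x := by field_simp
    _ ≤ 10 * x := by
        have : log x ^ 2 * (1 + √x) / log 2 ≤ 8 * x := by
          rw [div_le_iff₀ hlog2]; linarith
        linarith

lemma sum_mul_log_div_le {a : ℕ → ℝ} {C x : ℝ} (hx : 2 ≤ x) (hC : 0 ≤ C)
    (hA : ∀ k ∈ Icc 2 ⌊x⌋₊, ∑ n ∈ Icc 2 k, a n * log n ≤ C * k) :
    ∑ n ∈ Icc 2 ⌊x⌋₊, a n * log (x / n) ≤ C * (10 * x / log x) := by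
  have hN2 : 2 ≤ ⌊x⌋₊ := Nat.le_floor (by exact_mod_cast hx)
  calc ∑ n ∈ Icc 2 ⌊x⌋₊, a n * log (x / n)
      = ∑ n ∈ Icc 2 ⌊x⌋₊, a n * log n * (log (x / n) / log n) := by
        refine sum_congr rfl fun n hn => ?_
        have : 0 < log n := log_pos (by exact_mod_cast (mem_Icc.mp hn).1)
        field_simp
    _ ≤ C * (2 * (log (x / 2) / log 2) + ∑ n ∈ Ioc 2 ⌊x⌋₊, log (x / n) / log n) := by
        simpa using sum_mul_le_of_sum_le_mul hN2 hA (antitoneOn_log_div_div_log x)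
          (div_nonneg (log_div_natCast_nonneg (by omega) le_rfl) (log_natCast_nonneg _))
    _ ≤ C * (10 * x / log x) :=
        mul_le_mul_of_nonneg_left (two_mul_add_sum_Ioc_log_div_div_log_le hx) hC

theorem stmt0_general (g : ℕ → ℝ) (hg0 : ∀ n, 0 ≤ g n)
    (hgm : ∀ m n : ℕ, Nat.Coprime m n → g (m * n) = g m * g n)
    (x : ℝ) (hx : 2 ≤ x) (Δ : ℝ)
    (hΔ : ∀ y : ℝ, 1 ≤ y → y ≤ x →
      ∑ q ∈ (Finset.range (⌊y⌋₊ + 1)).filter (fun q => IsPrimePow q),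
        g q * Real.log q ≤ Δ * y) :
    ∑ n ∈ (Finset.range (⌊x⌋₊ + 1)).filter (fun n => 2 ≤ n), g n ≤
      (x / Real.log x + 10 * x / (Real.log x) ^ 2) * Δ *
        ∑ n ∈ Finset.Icc 1 ⌊x⌋₊, g n / n := by
  set N := ⌊x⌋₊
  set S := ∑ n ∈ Icc 1 N, g n / n
  have hx0 : 0 < x := by linarith
  have hL : 0 < log x := log_pos (by linarith)
  have hΔ0 : 0 ≤ Δ := by simpa [sum_filter, sum_range_succ] using hΔ 1 le_rfl (by linarith)
  have hS0 : 0 ≤ S := sum_nonneg fun n _ => div_nonneg (hg0 n) n.cast_nonneg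
  have hK : ∀ k ∈ Icc 2 N, ∑ n ∈ Icc 2 k, g n * log n ≤ Δ * S * k := fun k hk =>
    sum_mul_log_le_mul_sum_div_of_le_floor hg0 hgm hΔ0 hΔ (mem_Icc.mp hk).2
  have hlog : ∑ n ∈ Icc 2 N, g n * log n ≤ Δ * S * x :=
    (sum_mul_log_le_mul_sum_div_of_le_floor hg0 hgm hΔ0 hΔ le_rfl).trans
      (mul_le_mul_of_nonneg_left (Nat.floor_le hx0.le) (by positivity))
  have hsplit : (∑ n ∈ Icc 2 N, g n) * log x =
      ∑ n ∈ Icc 2 N, g n * log n + ∑ n ∈ Icc 2 N, g n * log (x / n) := by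
    rw [sum_mul, ← sum_add_distrib]
    refine sum_congr rfl fun n hn => ?_
    rw [log_div hx0.ne' (Nat.cast_ne_zero.mpr (by have := (mem_Icc.mp hn).1; omega))]
    ring
  have hrange : (range (N + 1)).filter (fun n => 2 ≤ n) = Icc 2 N := by
    ext n; simp [and_comm]
  rw [hrange, show
    (x / log x + 10 * x / log x ^ 2) * Δ * S = (Δ * S * x + Δ * S * (10 * x / log x)) / log x by
    field_simp, le_div_iff₀ hL, hsplit]
  linarith [sum_mul_log_div_le hx (by positivity) hK]

theorem stmt0 (g : ℕ → ℝ) (hg0 : ∀ n, 0 ≤ g n) (hg1 : g 1 = 1)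
    (hgm : ∀ m n : ℕ, Nat.Coprime m n → g (m * n) = g m * g n)
    (x : ℝ) (hx : 2 ≤ x) (Δ : ℝ)
    (hΔ : ∀ y : ℝ, 1 ≤ y → y ≤ x →
      ∑ q ∈ (Finset.range (⌊y⌋₊ + 1)).filter (fun q => IsPrimePow q),
        g q * Real.log q ≤ Δ * y) :
    ∑ n ∈ (Finset.range (⌊x⌋₊ + 1)).filter (fun n => 2 ≤ n), g n ≤
      (x / Real.log x + 10 * x / (Real.log x) ^ 2) * Δ *
        ∑ n ∈ Finset.Icc 1 ⌊x⌋₊, g n / n :=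
  stmt0_general g hg0 hgm x hx Δ hΔ
end

section
/- Let g be a nonnegative multiplicative function bounded by β ≥ 1 on primes, with ∑ g(q)/q over higher prime powers convergent, and suppose ∑_{p ≤ x} g(p) log p ≥ c·x for a positive constant c and all sufficiently large x. Then ∑_{n ≤ x} g(n) ≫ x · exp(−∑_{p ≤ x} (1 − g(p))/p) for all x ≥ 1. -/
open Finset
open scoped Classical

noncomputable section Aux

/-- The set of primes up to `N`. -/
def PN (N : ℕ) : Finset ℕ := (Finset.range (N + 1)).filter Nat.Prime

lemma mem_PN {N p : ℕ} : p ∈ PN N ↔ p.Prime ∧ p ≤ N := by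
  simp [PN, Finset.mem_filter, Finset.mem_range, Nat.lt_succ_iff, and_comm]

lemma PN_mono {M N : ℕ} (h : M ≤ N) : PN M ⊆ PN N := by
  intro p hp; rw [mem_PN] at *; exact ⟨hp.1, hp.2.trans h⟩

lemma two_le_of_mem_PN {N p : ℕ} (hp : p ∈ PN N) : 2 ≤ p := (mem_PN.mp hp).1.two_le

/-- multiplicativity over finsets of distinct primes -/
lemma g_prod_primes (g : ℕ → ℝ) (hg1 : g 1 = 1)
    (hgm : ∀ m n : ℕ, Nat.Coprime m n → g (m * n) = g m * g n) :
    ∀ s : Finset ℕ, (∀ p ∈ s, p.Prime) → g (∏ p ∈ s, p) = ∏ p ∈ s, g p := by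
  intro s
  induction s using Finset.cons_induction with
  | empty => intro _; simpa using hg1
  | cons p s hps ih =>
    intro hall
    have hp : p.Prime := hall p (Finset.mem_cons_self p s)
    have hs : ∀ q ∈ s, q.Prime := fun q hq => hall q (Finset.mem_cons_of_mem hq)
    have hcop : Nat.Coprime p (∏ q ∈ s, q) := by
      apply Nat.Coprime.prod_right
      intro q hq
      exact (Nat.coprime_primes hp (hs q hq)).mpr (by rintro rfl; exact hps hq)
    rw [Finset.prod_cons, Finset.prod_cons, hgm _ _ hcop, ih hs]

/-- expansion of a product of (1 + f p) over subsets -/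
lemma prod_one_add_eq (f : ℕ → ℝ) (s : Finset ℕ) :
    ∏ p ∈ s, (1 + f p) = ∑ A ∈ s.powerset, ∏ p ∈ A, f p := by
  have := Finset.prod_add f (fun _ => (1:ℝ)) s
  simp only [Finset.prod_const_one, mul_one] at this
  rw [← this]; exact Finset.prod_congr rfl fun p _ => (add_comm (f p) 1).symm

lemma one_add_le_exp (t : ℝ) : 1 + t ≤ Real.exp t := by
  simpa [add_comm] using Real.add_one_le_exp t

/-- `exp (t - t^2) ≤ 1 + t` for `t ≥ 0` -/
lemma exp_sub_sq_le (t : ℝ) (ht : 0 ≤ t) : Real.exp (t - t^2) ≤ 1 + t := by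
  have h1 : 1 - (t - t^2) ≤ Real.exp (-(t - t^2)) := by
    have := Real.add_one_le_exp (-(t - t^2)); linarith
  have hpos : 0 < 1 - t + t^2 := by nlinarith [sq_nonneg (t - 1)]
  have h2 : Real.exp (t - t^2) * (1 - t + t^2) ≤ 1 := by
    have := mul_le_mul_of_nonneg_left h1 (le_of_lt (Real.exp_pos (t - t^2)))
    rw [← Real.exp_add] at this
    simp only [add_neg_cancel, Real.exp_zero] at this
    calc Real.exp (t - t^2) * (1 - t + t^2)
        = Real.exp (t - t^2) * (1 - (t - t^2)) := by ring_nf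
      _ ≤ 1 := this
  nlinarith [Real.exp_pos (t - t^2), sq_nonneg t, mul_nonneg (mul_nonneg (Real.exp_pos (t-t^2)).le (sq_nonneg t)) ht]

/-- `e^u - 1 ≤ u * e^u` for `u ≥ 0` -/
lemma exp_sub_one_le (u : ℝ) (hu : 0 ≤ u) : Real.exp u - 1 ≤ u * Real.exp u := by
  have h := Real.add_one_le_exp (-u)
  have hpos := Real.exp_pos u
  have : Real.exp (-u) = (Real.exp u)⁻¹ := Real.exp_neg u
  rw [this] at h
  have h2 : (1 - u) * Real.exp u ≤ 1 := by
    have := mul_le_mul_of_nonneg_right h hpos.le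
    rwa [inv_mul_cancel₀ hpos.ne', add_comm, ← sub_eq_add_neg] at this
  nlinarith



/-- telescoping bound -/
lemma sum_inv_sq_Icc2 (N : ℕ) (hN : 1 ≤ N) :
    ∑ b ∈ Finset.Icc 2 N, (1 / (b:ℝ))^2 ≤ 1 - 1/(N:ℝ) := by
  induction N with
  | zero => omega
  | succ N ih =>
    rcases Nat.eq_or_lt_of_le hN with h1 | h2
    · simp [← h1]
    · have hN1 : 1 ≤ N := by omega
      rw [Finset.sum_Icc_succ_top (by omega : 2 ≤ N + 1)]
      have hNpos : (0:ℝ) < N := by positivity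
      have key : (1 / ((N:ℝ)+1))^2 ≤ 1/(N:ℝ) - 1/((N:ℝ)+1) := by
        rw [div_sub_div _ _ (ne_of_gt hNpos) (by positivity)]
        rw [div_pow, one_pow, div_le_div_iff₀ (by positivity) (by positivity)]
        nlinarith [hNpos]
      have h3 := ih hN1
      push_cast
      push_cast at h3 key
      linarith

lemma sum_inv_sq_Icc1 (N : ℕ) : ∑ b ∈ Finset.Icc 1 N, (1 / (b:ℝ))^2 ≤ 2 := by
  rcases Nat.lt_or_ge N 1 with h | h
  · interval_cases N; simp
  · rw [← Finset.sum_Ioc_add_eq_sum_Icc h]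
    have h2 : Finset.Ioc 1 N = Finset.Icc 2 N := rfl
    rw [h2]
    have h3 := sum_inv_sq_Icc2 N h
    have h4 : (0:ℝ) < 1/(N:ℝ) := by positivity
    have h5 : (1 / ((1:ℕ):ℝ))^2 = 1 := by norm_num
    rw [h5]
    linarith

lemma sum_inv_sq_PN (N : ℕ) : ∑ p ∈ PN N, (1 / (p:ℝ))^2 ≤ 1 := by
  rcases Nat.lt_or_ge N 1 with h | h
  · interval_cases N; simp [PN, Finset.filter_singleton, Nat.not_prime_zero]
  · have hsub : PN N ⊆ Finset.Icc 2 N := by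
      intro p hp; rw [mem_PN] at hp; rw [Finset.mem_Icc]; exact ⟨hp.1.two_le, hp.2⟩
    have h4 : (0:ℝ) ≤ 1/(N:ℝ) := by positivity
    calc ∑ p ∈ PN N, (1 / (p:ℝ))^2 ≤ ∑ b ∈ Finset.Icc 2 N, (1 / (b:ℝ))^2 :=
          Finset.sum_le_sum_of_subset_of_nonneg hsub (fun _ _ _ => by positivity)
      _ ≤ 1 - 1/(N:ℝ) := sum_inv_sq_Icc2 N h
      _ ≤ 1 := by linarith

/-- Chebyshev bound -/
lemma chebyshev (N : ℕ) : ∑ p ∈ PN N, Real.log p ≤ N * Real.log 4 := by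
  have h1 : ∑ p ∈ PN N, Real.log p = Real.log (∏ p ∈ PN N, (p:ℝ)) := by
    rw [Real.log_prod]
    intro p hp
    have := (mem_PN.mp hp).1.two_le
    positivity
  rw [h1]
  have h2 : ∏ p ∈ PN N, (p:ℝ) = ((primorial N : ℕ) : ℝ) := by
    rw [primorial]; push_cast; rfl
  have hpos : 0 < primorial N :=
    Finset.prod_pos (fun q hq => (Finset.mem_filter.mp hq).2.pos)
  rw [h2]
  calc Real.log ((primorial N : ℕ) : ℝ) ≤ Real.log ((4:ℝ)^N) := by
        apply Real.log_le_log (by exact_mod_cast hpos)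
        exact_mod_cast primorial_le_4_pow N
    _ = N * Real.log 4 := by rw [Real.log_pow]

/-- Mertens' first theorem (upper bound) -/
lemma mertens1 (N : ℕ) (hN : 1 ≤ N) :
    ∑ p ∈ PN N, Real.log p / p ≤ Real.log N + Real.log 4 := by
  have hNpos : (0:ℝ) < N := by positivity
  have key1 : ∀ p ∈ PN N, (N:ℝ) * (Real.log p / p) ≤ ((N/p : ℕ) + 1) * Real.log p := by
    intro p hp
    have hp2 := (mem_PN.mp hp).1.two_le
    have hppos : (0:ℝ) < p := by positivity
    have hlogp : (0:ℝ) ≤ Real.log p := Real.log_natCast_nonneg p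
    have hdiv : (N:ℝ) < ((N/p : ℕ) + 1) * p := by
      have h2 : N % p < p := Nat.mod_lt _ (by omega)
      have h3 : p * (N/p) + N % p = N := Nat.div_add_mod N p
      have h4 : (N/p + 1) * p = p * (N/p) + p := by ring
      have h5 : N < (N/p + 1) * p := by omega
      exact_mod_cast h5
    rw [mul_div_assoc', div_le_iff₀ hppos]
    nlinarith
  have key2 : ∑ p ∈ PN N, ((N/p : ℕ) : ℝ) * Real.log p ≤ (N:ℝ) * Real.log N := by
    have step1 : ∀ p ∈ PN N, ((N/p : ℕ) : ℝ) * Real.log p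
        = ∑ n ∈ Finset.Ioc 0 N, (if p ∣ n then Real.log p else 0) := by
      intro p hp
      rw [← Finset.sum_filter, Finset.sum_const, Nat.Ioc_filter_dvd_card_eq_div]
      simp [nsmul_eq_mul]
    rw [Finset.sum_congr rfl step1, Finset.sum_comm]
    have inner : ∀ n ∈ Finset.Ioc 0 N,
        ∑ p ∈ PN N, (if p ∣ n then Real.log p else 0) ≤ Real.log N := by
      intro n hn
      rw [Finset.mem_Ioc] at hn
      rw [← Finset.sum_filter]
      have hset : (PN N).filter (· ∣ n) = n.primeFactors := by
        ext q
        simp only [Finset.mem_filter, mem_PN, Nat.mem_primeFactors]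
        constructor
        · rintro ⟨⟨hq, _⟩, hdvd⟩; exact ⟨hq, hdvd, by omega⟩
        · rintro ⟨hq, hdvd, _⟩
          exact ⟨⟨hq, le_trans (Nat.le_of_dvd (by omega) hdvd) hn.2⟩, hdvd⟩
      rw [hset]
      have h1 : ∑ q ∈ n.primeFactors, Real.log q = Real.log (∏ q ∈ n.primeFactors, (q:ℝ)) := by
        rw [Real.log_prod]
        intro q hq
        have := (Nat.prime_of_mem_primeFactors hq).two_le
        positivity
      rw [h1]
      have h2 : (∏ q ∈ n.primeFactors, (q:ℝ)) = ((∏ q ∈ n.primeFactors, q : ℕ) : ℝ) := by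
        push_cast; rfl
      rw [h2]
      have hpos : 0 < ∏ q ∈ n.primeFactors, q :=
        Finset.prod_pos (fun q hq => (Nat.prime_of_mem_primeFactors hq).pos)
      apply Real.log_le_log (by exact_mod_cast hpos)
      have hdvd := Nat.prod_primeFactors_dvd n
      have h6 := Nat.le_of_dvd (by omega) hdvd
      exact_mod_cast le_trans h6 hn.2
    calc ∑ n ∈ Finset.Ioc 0 N, ∑ p ∈ PN N, (if p ∣ n then Real.log p else 0)
        ≤ ∑ n ∈ Finset.Ioc 0 N, Real.log N := Finset.sum_le_sum inner
      _ = (N:ℝ) * Real.log N := by rw [Finset.sum_const, Nat.card_Ioc]; simp [nsmul_eq_mul]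
  have main : (N:ℝ) * ∑ p ∈ PN N, Real.log p / p ≤ (N:ℝ) * (Real.log N + Real.log 4) := by
    rw [Finset.mul_sum]
    calc ∑ p ∈ PN N, (N:ℝ) * (Real.log p / p)
        ≤ ∑ p ∈ PN N, ((N/p : ℕ) + 1 : ℝ) * Real.log p := Finset.sum_le_sum key1
      _ = ∑ p ∈ PN N, ((N/p : ℕ) : ℝ) * Real.log p + ∑ p ∈ PN N, Real.log p := by
          rw [← Finset.sum_add_distrib]
          exact Finset.sum_congr rfl (fun p _ => by ring)
      _ ≤ (N:ℝ) * Real.log N + N * Real.log 4 := add_le_add key2 (chebyshev N)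
      _ = (N:ℝ) * (Real.log N + Real.log 4) := by ring
  exact le_of_mul_le_mul_left (by linarith) hNpos


lemma sf_sum_le_exp (N : ℕ) :
    ∑ a ∈ (Finset.Icc 1 N).filter Squarefree, 1/(a:ℝ)
      ≤ Real.exp (∑ p ∈ PN N, 1/(p:ℝ)) := by
  set S := (Finset.Icc 1 N).filter Squarefree with hS
  have hterm : ∀ a ∈ S, (1:ℝ)/a = ∏ p ∈ a.primeFactors, (1/(p:ℝ)) := by
    intro a ha
    rw [Finset.mem_filter] at ha
    have hprod : ∏ p ∈ a.primeFactors, p = a := Nat.prod_primeFactors_of_squarefree ha.2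
    rw [Finset.prod_div_distrib, Finset.prod_const_one]
    congr 1
    rw [← Nat.cast_prod, hprod]
  have hinj : ∀ x ∈ S, ∀ y ∈ S, x.primeFactors = y.primeFactors → x = y := by
    intro x hx y hy hxy
    rw [Finset.mem_filter] at hx hy
    rw [← Nat.prod_primeFactors_of_squarefree hx.2, ← Nat.prod_primeFactors_of_squarefree hy.2, hxy]
  have himg : S.image Nat.primeFactors ⊆ (PN N).powerset := by
    intro A hA
    rw [Finset.mem_image] at hA
    obtain ⟨a, ha, rfl⟩ := hA
    rw [Finset.mem_filter, Finset.mem_Icc] at ha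
    rw [Finset.mem_powerset]
    intro q hq
    rw [Nat.mem_primeFactors] at hq
    rw [mem_PN]
    exact ⟨hq.1, le_trans (Nat.le_of_dvd (by omega) hq.2.1) ha.1.2⟩
  calc ∑ a ∈ S, 1/(a:ℝ) = ∑ a ∈ S, ∏ p ∈ a.primeFactors, (1/(p:ℝ)) :=
        Finset.sum_congr rfl hterm
    _ = ∑ A ∈ S.image Nat.primeFactors, ∏ p ∈ A, (1/(p:ℝ)) := by rw [Finset.sum_image hinj]
    _ ≤ ∑ A ∈ (PN N).powerset, ∏ p ∈ A, (1/(p:ℝ)) := by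
        apply Finset.sum_le_sum_of_subset_of_nonneg himg
        intro A _ _
        apply Finset.prod_nonneg; intro p _; positivity
    _ = ∏ p ∈ PN N, (1 + 1/(p:ℝ)) := (prod_one_add_eq _ _).symm
    _ ≤ ∏ p ∈ PN N, Real.exp (1/(p:ℝ)) := by
        apply Finset.prod_le_prod
        · intro p _; positivity
        · intro p _; exact one_add_le_exp _
    _ = Real.exp (∑ p ∈ PN N, 1/(p:ℝ)) := (Real.exp_sum _ _).symm

lemma harmonic_le_sf (N : ℕ) :
    ∑ n ∈ Finset.Icc 1 N, 1/(n:ℝ)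
      ≤ 2 * ∑ a ∈ (Finset.Icc 1 N).filter Squarefree, 1/(a:ℝ) := by
  classical
  set S := (Finset.Icc 1 N).filter Squarefree with hS
  -- decomposition data
  have hdec : ∀ n : ℕ, ∃ q : ℕ × ℕ, q.2^2 * q.1 = n ∧ Squarefree q.1 := by
    intro n
    obtain ⟨a, b, h1, h2⟩ := Nat.sq_mul_squarefree n
    exact ⟨(a, b), h1, h2⟩
  choose F hF1 hF2 using hdec
  have hinj : ∀ x ∈ Finset.Icc 1 N, ∀ y ∈ Finset.Icc 1 N, F x = F y → x = y := by
    intro x _ y _ hxy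
    rw [← hF1 x, ← hF1 y, hxy]
  have himg : (Finset.Icc 1 N).image F ⊆ S ×ˢ (Finset.Icc 1 N) := by
    intro q hq
    rw [Finset.mem_image] at hq
    obtain ⟨n, hn, rfl⟩ := hq
    rw [Finset.mem_Icc] at hn
    have h1 := hF1 n
    have h2 := hF2 n
    have ha1 : 1 ≤ (F n).1 := by
      rcases Nat.eq_zero_or_pos (F n).1 with h | h
      · rw [h, mul_zero] at h1; omega
      · exact h
    have hb1 : 1 ≤ (F n).2 := by
      rcases Nat.eq_zero_or_pos (F n).2 with h | h
      · rw [h] at h1; simp at h1; omega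
      · exact h
    have haN : (F n).1 ≤ N := by
      have h5 : (F n).1 ≤ n := by
        calc (F n).1 = 1 * (F n).1 := (one_mul _).symm
          _ ≤ (F n).2^2 * (F n).1 := Nat.mul_le_mul_right _ (by nlinarith)
          _ = n := h1
      omega
    have hbN : (F n).2 ≤ N := by
      have h5 : (F n).2 ≤ n := by
        calc (F n).2 ≤ (F n).2^2 := by nlinarith
          _ = (F n).2^2 * 1 := (mul_one _).symm
          _ ≤ (F n).2^2 * (F n).1 := Nat.mul_le_mul_left _ ha1
          _ = n := h1
      omega
    rw [Finset.mem_product, Finset.mem_filter, Finset.mem_Icc, Finset.mem_Icc]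
    exact ⟨⟨⟨ha1, haN⟩, h2⟩, hb1, hbN⟩
  have hterm : ∀ n ∈ Finset.Icc 1 N, (1:ℝ)/n = 1/((F n).1:ℝ) * (1/((F n).2:ℝ))^2 := by
    intro n hn
    rw [Finset.mem_Icc] at hn
    have h1 := hF1 n
    have ha1 : (F n).1 ≠ 0 := by rintro h; rw [h, mul_zero] at h1; omega
    have hb1 : (F n).2 ≠ 0 := by rintro h; rw [h] at h1; simp at h1; omega
    have hn' : (n:ℝ) = ((F n).2:ℝ)^2 * ((F n).1:ℝ) := by exact_mod_cast h1.symm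
    have ha0 : ((F n).1:ℝ) ≠ 0 := by exact_mod_cast ha1
    have hb0 : ((F n).2:ℝ) ≠ 0 := by exact_mod_cast hb1
    rw [hn']
    field_simp
  have hnonneg : ∀ q ∈ S ×ˢ (Finset.Icc 1 N), (0:ℝ) ≤ 1/(q.1:ℝ) * (1/(q.2:ℝ))^2 := by
    intro q _; positivity
  have hSnonneg : (0:ℝ) ≤ ∑ a ∈ S, 1/(a:ℝ) := by
    apply Finset.sum_nonneg; intro a _; positivity
  calc ∑ n ∈ Finset.Icc 1 N, 1/(n:ℝ)
      = ∑ n ∈ Finset.Icc 1 N, 1/((F n).1:ℝ) * (1/((F n).2:ℝ))^2 :=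
        Finset.sum_congr rfl hterm
    _ = ∑ q ∈ (Finset.Icc 1 N).image F, 1/(q.1:ℝ) * (1/(q.2:ℝ))^2 := by
        rw [Finset.sum_image hinj]
    _ ≤ ∑ q ∈ S ×ˢ (Finset.Icc 1 N), 1/(q.1:ℝ) * (1/(q.2:ℝ))^2 :=
        Finset.sum_le_sum_of_subset_of_nonneg himg (fun q hq _ => hnonneg q hq)
    _ = (∑ a ∈ S, 1/(a:ℝ)) * (∑ b ∈ Finset.Icc 1 N, (1/(b:ℝ))^2) := by
        rw [Finset.sum_mul_sum]
        rw [Finset.sum_product]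
    _ ≤ (∑ a ∈ S, 1/(a:ℝ)) * 2 := by
        apply mul_le_mul_of_nonneg_left (sum_inv_sq_Icc1 N) hSnonneg
    _ = 2 * ∑ a ∈ S, 1/(a:ℝ) := by ring

/-- Mertens' second theorem, lower bound form -/
lemma mertens2 (x : ℝ) (hx : 1 ≤ x) :
    Real.log x ≤ 2 * Real.exp (∑ p ∈ PN ⌊x⌋₊, 1/(p:ℝ)) := by
  set N := ⌊x⌋₊ with hN
  have hN1 : 1 ≤ N := Nat.le_floor (by exact_mod_cast hx)
  have hxN : x ≤ (N:ℝ) + 1 := (Nat.lt_floor_add_one x).le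
  have h1 : Real.log x ≤ Real.log ((N:ℝ)+1) := Real.log_le_log (by linarith) hxN
  have h2 : Real.log ((N:ℝ)+1) ≤ ∑ n ∈ Finset.Icc 1 N, 1/(n:ℝ) := by
    have := log_add_one_le_harmonic N
    have heq : ((harmonic N : ℚ) : ℝ) = ∑ n ∈ Finset.Icc 1 N, 1/(n:ℝ) := by
      rw [harmonic_eq_sum_Icc]
      push_cast
      exact Finset.sum_congr rfl (fun n _ => (one_div _).symm)
    rw [heq] at this
    refine le_trans (le_of_eq ?_) this
    push_cast
    rfl
  have h3 := harmonic_le_sf N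
  have h4 := sf_sum_le_exp N
  calc Real.log x ≤ ∑ n ∈ Finset.Icc 1 N, 1/(n:ℝ) := le_trans h1 h2
    _ ≤ 2 * ∑ a ∈ (Finset.Icc 1 N).filter Squarefree, 1/(a:ℝ) := h3
    _ ≤ 2 * Real.exp (∑ p ∈ PN N, 1/(p:ℝ)) := by linarith

lemma log_four_le_two : Real.log 4 ≤ 2 := by
  have he : (2:ℝ) ≤ Real.exp 1 := by
    have := Real.add_one_le_exp 1; linarith
  have h4 : (4:ℝ) ≤ Real.exp 2 := by
    have h : Real.exp 2 = Real.exp 1 * Real.exp 1 := by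
      rw [← Real.exp_add]; norm_num
    nlinarith
  calc Real.log 4 ≤ Real.log (Real.exp 2) := Real.log_le_log (by norm_num) h4
    _ = 2 := Real.log_exp 2

set_option maxHeartbeats 1000000 in
/-- Rankin's trick: lower bound for the sum of `g m / m` over `m ≤ y`. -/
lemma L_lower (g : ℕ → ℝ) (β : ℝ) (hβ : 1 ≤ β)
    (hg0 : ∀ n, 0 ≤ g n) (hg1 : g 1 = 1)
    (hgm : ∀ m n : ℕ, Nat.Coprime m n → g (m * n) = g m * g n)
    (hgp : ∀ p : ℕ, p.Prime → g p ≤ β)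
    (K : ℕ) (hK : 2 * Real.exp 1 * β + 1 ≤ K)
    (y : ℝ) (hy0 : 0 < y) (hy : 2 * K ≤ Real.log y) :
    (1/2) * Real.exp (-β^2) * Real.exp (∑ p ∈ PN ⌊y^((1:ℝ)/K)⌋₊, g p / p)
      ≤ ∑ m ∈ Finset.Icc 1 ⌊y⌋₊, g m / m := by
  classical
  have hexp1 : (2:ℝ) ≤ Real.exp 1 := by have := Real.add_one_le_exp 1; linarith
  have hKpos : (0:ℝ) < K := by nlinarith
  have hlogy : (0:ℝ) < Real.log y := by nlinarith
  have hy1 : (1:ℝ) < y := by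
    by_contra h
    push_neg at h
    have := Real.log_nonpos (le_of_lt hy0) h
    linarith
  set z : ℝ := y^((1:ℝ)/K) with hz
  have hzpos : 0 < z := Real.rpow_pos_of_pos (by linarith) _
  have hlogz : Real.log z = Real.log y / K := by
    rw [hz, Real.log_rpow (by linarith)]; ring
  have hlogz2 : 2 ≤ Real.log z := by
    rw [hlogz, le_div_iff₀ hKpos]; linarith
  have hz1 : (1:ℝ) < z := by
    by_contra h
    push_neg at h
    have := Real.log_nonpos (by linarith) h
    linarith
  have hfloorz : 1 ≤ ⌊z⌋₊ := Nat.le_floor (by exact_mod_cast hz1.le)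
  set s : Finset ℕ := PN ⌊z⌋₊ with hsdef
  set ε : ℝ := 1 / Real.log z with hε
  have hεpos : 0 < ε := by rw [hε]; positivity
  have hεlogz : ε * Real.log z = 1 := by rw [hε]; field_simp
  have hεlog4 : ε * Real.log 4 ≤ 1 := by
    rw [← hεlogz]
    exact mul_le_mul_of_nonneg_left (le_trans log_four_le_two hlogz2) (le_of_lt hεpos)
  have hp2 : ∀ p ∈ s, 2 ≤ p := fun p hp => (mem_PN.mp hp).1.two_le
  have hplogz : ∀ p ∈ s, Real.log p ≤ Real.log z := by
    intro p hp
    have hple : (p:ℝ) ≤ (⌊z⌋₊:ℝ) := by exact_mod_cast (mem_PN.mp hp).2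
    have hfl : ((⌊z⌋₊:ℕ):ℝ) ≤ z := Nat.floor_le (le_of_lt hzpos)
    exact Real.log_le_log (by have := hp2 p hp; positivity) (le_trans hple hfl)
  have hppos : ∀ p ∈ s, (0:ℝ) < p := fun p hp => by have := hp2 p hp; positivity
  have hgpp_nonneg : ∀ p ∈ s, (0:ℝ) ≤ g p / p := fun p hp => by
    have h1 := hppos p hp; have h2 := hg0 p; positivity
  -- expansion over subsets
  have hSall : ∑ A ∈ s.powerset, ∏ p ∈ A, (g p / p) = ∏ p ∈ s, (1 + g p / p) :=
    (prod_one_add_eq _ _).symm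
  have hSallpos : (0:ℝ) ≤ ∏ p ∈ s, (1 + g p / p) :=
    Finset.prod_nonneg (fun p hp => by have := hgpp_nonneg p hp; linarith)
  -- lower bound for the full product
  have hProdLower : Real.exp (-β^2) * Real.exp (∑ p ∈ s, g p / p) ≤ ∏ p ∈ s, (1 + g p / p) := by
    have h2 : ∏ p ∈ s, Real.exp (g p / p - (g p / p)^2) ≤ ∏ p ∈ s, (1 + g p / p) :=
      Finset.prod_le_prod (fun p _ => (Real.exp_pos _).le)
        (fun p hp => exp_sub_sq_le _ (hgpp_nonneg p hp))
    rw [← Real.exp_sum] at h2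
    refine le_trans ?_ h2
    rw [← Real.exp_add, Real.exp_le_exp, Finset.sum_sub_distrib]
    have h3 : ∑ p ∈ s, (g p / p)^2 ≤ β^2 := by
      calc ∑ p ∈ s, (g p / p)^2 ≤ ∑ p ∈ s, β^2 * (1/(p:ℝ))^2 := by
            apply Finset.sum_le_sum
            intro p hp
            have hpp := hppos p hp
            have hgpn := hg0 p
            have hgpb := hgp p (mem_PN.mp hp).1
            have h4 : (g p / p)^2 ≤ (β / p)^2 := by
              gcongr
            calc (g p / p)^2 ≤ (β / p)^2 := h4
              _ = β^2 * (1/(p:ℝ))^2 := by field_simp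
        _ = β^2 * ∑ p ∈ s, (1/(p:ℝ))^2 := by rw [Finset.mul_sum]
        _ ≤ β^2 * 1 := mul_le_mul_of_nonneg_left (sum_inv_sq_PN _) (by positivity)
        _ = β^2 := mul_one _
    linarith
  -- good and bad subsets
  set Good := s.powerset.filter (fun A => ((∏ p ∈ A, p : ℕ):ℝ) ≤ y) with hGood
  set Bad := s.powerset.filter (fun A => ¬ ((∏ p ∈ A, p : ℕ):ℝ) ≤ y) with hBad
  have hsplit : ∑ A ∈ Good, ∏ p ∈ A, (g p / p) + ∑ A ∈ Bad, ∏ p ∈ A, (g p / p)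
      = ∑ A ∈ s.powerset, ∏ p ∈ A, (g p / p) := by
    rw [hGood, hBad]
    exact Finset.sum_filter_add_sum_filter_not _ _ _
  -- bound on the bad subsets
  have hBadBound : ∑ A ∈ Bad, ∏ p ∈ A, (g p / p)
      ≤ Real.exp (2 * Real.exp 1 * β - K) * ∏ p ∈ s, (1 + g p / p) := by
    have step1 : ∀ A ∈ Bad, ∏ p ∈ A, (g p / p)
        ≤ Real.exp (-(K:ℝ)) * ∏ p ∈ A, (g p / p * (p:ℝ)^ε) := by
      intro A hA
      rw [hBad, Finset.mem_filter] at hA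
      obtain ⟨hA1, hA2⟩ := hA
      rw [Finset.mem_powerset] at hA1
      push_neg at hA2
      have hprodpos : (0:ℝ) < ((∏ p ∈ A, p : ℕ):ℝ) := by
        have h0 : 0 < ∏ p ∈ A, p := Finset.prod_pos (fun p hp => by have := hp2 p (hA1 hp); omega)
        exact_mod_cast h0
      have hrpow : Real.exp (K:ℝ) ≤ ((∏ p ∈ A, p : ℕ):ℝ)^ε := by
        calc Real.exp (K:ℝ) = y^ε := by
              rw [Real.rpow_def_of_pos (by linarith : (0:ℝ) < y)]
              congr 1
              rw [hε, hlogz]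
              field_simp
            _ ≤ ((∏ p ∈ A, p : ℕ):ℝ)^ε :=
              Real.rpow_le_rpow (by linarith) (le_of_lt hA2) (le_of_lt hεpos)
      have hprodrw : ∏ p ∈ A, (g p / p * (p:ℝ)^ε)
          = (∏ p ∈ A, (g p / p)) * ((∏ p ∈ A, p : ℕ):ℝ)^ε := by
        rw [Finset.prod_mul_distrib]
        congr 1
        rw [show ((∏ p ∈ A, p : ℕ):ℝ) = ∏ p ∈ A, (p:ℝ) from by push_cast; rfl]
        exact (Real.finset_prod_rpow A _ (fun p hp => by have := hppos p (hA1 hp); positivity) ε)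
      rw [hprodrw]
      have hwn : (0:ℝ) ≤ ∏ p ∈ A, (g p / p) :=
        Finset.prod_nonneg (fun p hp => hgpp_nonneg p (hA1 hp))
      calc ∏ p ∈ A, (g p / p)
          = Real.exp (-(K:ℝ)) * (∏ p ∈ A, (g p / p)) * Real.exp (K:ℝ) := by
            rw [mul_assoc, mul_comm (∏ p ∈ A, (g p / p)), ← mul_assoc, ← Real.exp_add]
            simp
        _ ≤ Real.exp (-(K:ℝ)) * (∏ p ∈ A, (g p / p)) * ((∏ p ∈ A, p : ℕ):ℝ)^ε :=
            mul_le_mul_of_nonneg_left hrpow (by positivity)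
        _ = Real.exp (-(K:ℝ)) * ((∏ p ∈ A, (g p / p)) * ((∏ p ∈ A, p : ℕ):ℝ)^ε) := by ring
    have step2 : ∑ A ∈ Bad, ∏ p ∈ A, (g p / p * (p:ℝ)^ε)
        ≤ ∏ p ∈ s, (1 + g p / p * (p:ℝ)^ε) := by
      rw [prod_one_add_eq]
      apply Finset.sum_le_sum_of_subset_of_nonneg (Finset.filter_subset _ _)
      intro A hA _
      rw [Finset.mem_powerset] at hA
      apply Finset.prod_nonneg
      intro p hp
      have h1 := hgpp_nonneg p (hA hp)
      have h2 : (0:ℝ) < (p:ℝ)^ε := Real.rpow_pos_of_pos (hppos p (hA hp)) _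
      positivity
    have step3 : ∏ p ∈ s, (1 + g p / p * (p:ℝ)^ε)
        ≤ (∏ p ∈ s, (1 + g p / p)) * Real.exp (2 * Real.exp 1 * β) := by
      have factor : ∀ p ∈ s, 1 + g p / p * (p:ℝ)^ε
          ≤ (1 + g p / p) * Real.exp (Real.exp 1 * β * ε * (Real.log p / p)) := by
        intro p hp
        have hpp := hppos p hp
        have hgpn := hg0 p
        have hgpb := hgp p (mem_PN.mp hp).1
        have hlp : (0:ℝ) ≤ Real.log p := Real.log_natCast_nonneg p
        have hεlp : ε * Real.log p ≤ 1 :=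
          le_trans (mul_le_mul_of_nonneg_left (hplogz p hp) (le_of_lt hεpos)) hεlogz.le
        have hpe : (p:ℝ)^ε = Real.exp (ε * Real.log p) := by
          rw [Real.rpow_def_of_pos hpp, mul_comm]
        have hpε1 : (1:ℝ) ≤ (p:ℝ)^ε := by
          rw [hpe, ← Real.exp_zero, Real.exp_le_exp]
          · positivity
        have hkey : (p:ℝ)^ε - 1 ≤ Real.exp 1 * (ε * Real.log p) := by
          rw [hpe]
          have h1 := exp_sub_one_le (ε * Real.log p) (by positivity)
          have h2 : Real.exp (ε * Real.log p) ≤ Real.exp 1 := Real.exp_le_exp.mpr hεlp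
          nlinarith [mul_nonneg (mul_nonneg hεpos.le hlp) (Real.exp_pos (ε * Real.log p)).le]
        have split : 1 + g p / p * (p:ℝ)^ε ≤ (1 + g p / p) * (1 + g p * ((p:ℝ)^ε - 1) / p) := by
          have expand : (1 + g p / p) * (1 + g p * ((p:ℝ)^ε - 1) / p)
              = 1 + g p / p * (p:ℝ)^ε + (g p / p) * (g p * ((p:ℝ)^ε - 1) / p) := by
            field_simp
            ring
          rw [expand]
          have hnn : 0 ≤ (g p / p) * (g p * ((p:ℝ)^ε - 1) / p) := by
            apply mul_nonneg (hgpp_nonneg p hp)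
            apply div_nonneg (mul_nonneg hgpn (by linarith)) hpp.le
          linarith
        refine le_trans split ?_
        apply mul_le_mul_of_nonneg_left _ (by have := hgpp_nonneg p hp; linarith)
        have harg : g p * ((p:ℝ)^ε - 1) / p ≤ Real.exp 1 * β * ε * (Real.log p / p) := by
          have hnum : g p * ((p:ℝ)^ε - 1) ≤ β * (Real.exp 1 * (ε * Real.log p)) := by
            apply mul_le_mul hgpb hkey (by linarith) (by linarith)
          calc g p * ((p:ℝ)^ε - 1) / p ≤ β * (Real.exp 1 * (ε * Real.log p)) / p := by
                gcongr
            _ = Real.exp 1 * β * ε * (Real.log p / p) := by ring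
        calc 1 + g p * ((p:ℝ)^ε - 1) / p
            ≤ 1 + Real.exp 1 * β * ε * (Real.log p / p) := by linarith
          _ ≤ Real.exp (Real.exp 1 * β * ε * (Real.log p / p)) := one_add_le_exp _
      calc ∏ p ∈ s, (1 + g p / p * (p:ℝ)^ε)
          ≤ ∏ p ∈ s, ((1 + g p / p) * Real.exp (Real.exp 1 * β * ε * (Real.log p / p))) := by
            apply Finset.prod_le_prod
            · intro p hp
              have h2 : (0:ℝ) < (p:ℝ)^ε := Real.rpow_pos_of_pos (hppos p hp) _
              have := hgpp_nonneg p hp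
              positivity
            · exact factor
        _ = (∏ p ∈ s, (1 + g p / p)) * Real.exp (∑ p ∈ s, Real.exp 1 * β * ε * (Real.log p / p)) := by
            rw [Finset.prod_mul_distrib, Real.exp_sum]
        _ ≤ (∏ p ∈ s, (1 + g p / p)) * Real.exp (2 * Real.exp 1 * β) := by
            apply mul_le_mul_of_nonneg_left _ hSallpos
            rw [Real.exp_le_exp]
            have hM : ∑ p ∈ s, Real.log p / p ≤ Real.log z + Real.log 4 := by
              refine le_trans (mertens1 ⌊z⌋₊ hfloorz) ?_
              have : Real.log (⌊z⌋₊:ℝ) ≤ Real.log z := by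
                apply Real.log_le_log (by exact_mod_cast hfloorz)
                exact Nat.floor_le (le_of_lt hzpos)
              linarith
            have hsum_nonneg2 : (0:ℝ) ≤ Real.exp 1 * β * ε := by positivity
            calc ∑ p ∈ s, Real.exp 1 * β * ε * (Real.log p / p)
                = Real.exp 1 * β * ε * ∑ p ∈ s, Real.log p / p := by rw [Finset.mul_sum]
              _ ≤ Real.exp 1 * β * ε * (Real.log z + Real.log 4) := by
                  apply mul_le_mul_of_nonneg_left hM hsum_nonneg2
              _ = Real.exp 1 * β * (ε * Real.log z + ε * Real.log 4) := by ring
              _ ≤ Real.exp 1 * β * (1 + 1) := by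
                  apply mul_le_mul_of_nonneg_left _ (by positivity)
                  rw [hεlogz]
                  linarith
              _ = 2 * Real.exp 1 * β := by ring
    calc ∑ A ∈ Bad, ∏ p ∈ A, (g p / p)
        ≤ ∑ A ∈ Bad, Real.exp (-(K:ℝ)) * ∏ p ∈ A, (g p / p * (p:ℝ)^ε) :=
          Finset.sum_le_sum step1
      _ = Real.exp (-(K:ℝ)) * ∑ A ∈ Bad, ∏ p ∈ A, (g p / p * (p:ℝ)^ε) := by
          rw [Finset.mul_sum]
      _ ≤ Real.exp (-(K:ℝ)) * (∏ p ∈ s, (1 + g p / p * (p:ℝ)^ε)) :=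
          mul_le_mul_of_nonneg_left step2 (Real.exp_pos _).le
      _ ≤ Real.exp (-(K:ℝ)) * ((∏ p ∈ s, (1 + g p / p)) * Real.exp (2 * Real.exp 1 * β)) :=
          mul_le_mul_of_nonneg_left step3 (Real.exp_pos _).le
      _ = Real.exp (2 * Real.exp 1 * β - K) * ∏ p ∈ s, (1 + g p / p) := by
          rw [Real.exp_sub, Real.exp_neg]
          field_simp
  -- the good subsets inject into Icc 1 ⌊y⌋₊
  have hGoodL : ∑ A ∈ Good, ∏ p ∈ A, (g p / p) ≤ ∑ m ∈ Finset.Icc 1 ⌊y⌋₊, g m / m := by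
    have hterm : ∀ A ∈ Good, ∏ p ∈ A, (g p / p) = g (∏ p ∈ A, p) / ((∏ p ∈ A, p : ℕ):ℝ) := by
      intro A hA
      rw [hGood, Finset.mem_filter, Finset.mem_powerset] at hA
      have hAprime : ∀ p ∈ A, p.Prime := fun p hp => (mem_PN.mp (hA.1 hp)).1
      rw [Finset.prod_div_distrib, g_prod_primes g hg1 hgm A hAprime]
      congr 1
      push_cast
      rfl
    have hinj : ∀ A ∈ Good, ∀ B ∈ Good, (∏ p ∈ A, p) = (∏ p ∈ B, p) → A = B := by
      intro A hA B hB hAB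
      rw [hGood, Finset.mem_filter, Finset.mem_powerset] at hA hB
      have hAprime : ∀ p ∈ A, p.Prime := fun p hp => (mem_PN.mp (hA.1 hp)).1
      have hBprime : ∀ p ∈ B, p.Prime := fun p hp => (mem_PN.mp (hB.1 hp)).1
      rw [← Nat.primeFactors_prod hAprime, ← Nat.primeFactors_prod hBprime, hAB]
    have himg : Good.image (fun A => ∏ p ∈ A, p) ⊆ Finset.Icc 1 ⌊y⌋₊ := by
      intro m hm
      rw [Finset.mem_image] at hm
      obtain ⟨A, hA, rfl⟩ := hm
      rw [hGood, Finset.mem_filter, Finset.mem_powerset] at hA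
      rw [Finset.mem_Icc]
      constructor
      · have h0 : 0 < ∏ p ∈ A, p :=
          Finset.prod_pos (fun p hp => lt_of_lt_of_le (by norm_num) (hp2 p (hA.1 hp)))
        omega
      · exact Nat.le_floor hA.2
    calc ∑ A ∈ Good, ∏ p ∈ A, (g p / p)
        = ∑ A ∈ Good, g (∏ p ∈ A, p) / ((∏ p ∈ A, p : ℕ):ℝ) := Finset.sum_congr rfl hterm
      _ = ∑ m ∈ Good.image (fun A => ∏ p ∈ A, p), g m / (m:ℝ) := by
          rw [Finset.sum_image hinj]
      _ ≤ ∑ m ∈ Finset.Icc 1 ⌊y⌋₊, g m / m := by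
          apply Finset.sum_le_sum_of_subset_of_nonneg himg
          intro m hm _
          rw [Finset.mem_Icc] at hm
          have : (0:ℝ) < m := by exact_mod_cast hm.1
          have := hg0 m
          positivity
  -- put it together
  have hExpSmall : Real.exp (2 * Real.exp 1 * β - K) ≤ 1/2 := by
    have h1 : 2 * Real.exp 1 * β - K ≤ -1 := by linarith
    calc Real.exp (2 * Real.exp 1 * β - K) ≤ Real.exp (-1) := Real.exp_le_exp.mpr h1
      _ ≤ 1/2 := by
        rw [Real.exp_neg]
        rw [inv_le_comm₀ (Real.exp_pos 1) (by norm_num)]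
        linarith
  have hGoodLower : (1/2) * (∏ p ∈ s, (1 + g p / p)) ≤ ∑ A ∈ Good, ∏ p ∈ A, (g p / p) := by
    have hb := hBadBound
    have h1 : ∑ A ∈ Bad, ∏ p ∈ A, (g p / p) ≤ (1/2) * ∏ p ∈ s, (1 + g p / p) := by
      calc ∑ A ∈ Bad, ∏ p ∈ A, (g p / p)
          ≤ Real.exp (2 * Real.exp 1 * β - K) * ∏ p ∈ s, (1 + g p / p) := hb
        _ ≤ (1/2) * ∏ p ∈ s, (1 + g p / p) :=
            mul_le_mul_of_nonneg_right hExpSmall hSallpos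
    have h2 := hsplit
    rw [hSall] at h2
    linarith
  calc (1/2) * Real.exp (-β^2) * Real.exp (∑ p ∈ PN ⌊y^((1:ℝ)/K)⌋₊, g p / p)
      ≤ (1/2) * (∏ p ∈ s, (1 + g p / p)) := by
        have := hProdLower
        rw [hsdef]
        nlinarith [Real.exp_pos (-β^2), Real.exp_pos (∑ p ∈ PN ⌊z⌋₊, g p / p)]
    _ ≤ ∑ A ∈ Good, ∏ p ∈ A, (g p / p) := hGoodLower
    _ ≤ ∑ m ∈ Finset.Icc 1 ⌊y⌋₊, g m / m := hGoodL

set_option maxHeartbeats 1000000 in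
/-- lower bound for the summatory function of `g` via the convolution trick -/
lemma G_lower (g : ℕ → ℝ) (β c : ℝ) (hβ : 1 ≤ β) (hc : 0 < c)
    (hg0 : ∀ n, 0 ≤ g n)
    (hgm : ∀ m n : ℕ, Nat.Coprime m n → g (m * n) = g m * g n)
    (hgp : ∀ p : ℕ, p.Prime → g p ≤ β)
    (x₀ : ℝ) (hlow : ∀ t : ℝ, x₀ ≤ t → c * t ≤ ∑ p ∈ PN ⌊t⌋₊, g p * Real.log p)
    (x : ℝ) (hx : 2 ≤ x) (hx1 : 1 ≤ Real.log x)
    (hx0 : x₀ ≤ Real.sqrt x)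
    (hc2 : 2 * β * Real.log 4 ≤ c * (Real.log x)^2) :
    (c/2) * (x / Real.log x) * ∑ m ∈ Finset.Icc 1 ⌊Real.sqrt x / (Real.log x)^2⌋₊, g m / m
      ≤ ∑ n ∈ Finset.Icc 1 ⌊x⌋₊, g n := by
  classical
  have hxpos : (0:ℝ) < x := by linarith
  set L : ℝ := Real.log x with hL
  have hLpos : 0 < L := by linarith
  set y : ℝ := Real.sqrt x / L^2 with hy
  have hsxpos : 0 < Real.sqrt x := Real.sqrt_pos.mpr hxpos
  have hypos : 0 < y := by rw [hy]; positivity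
  have hysx : y ≤ Real.sqrt x := by
    rw [hy]
    apply div_le_self hsxpos.le
    nlinarith
  set Y : ℕ := ⌊y⌋₊ with hY
  -- facts for m in range
  have hmfacts : ∀ m ∈ Finset.Icc 1 Y, (1:ℝ) ≤ (m:ℝ) ∧ (m:ℝ) ≤ y := by
    intro m hm
    rw [Finset.mem_Icc] at hm
    constructor
    · exact_mod_cast hm.1
    · calc (m:ℝ) ≤ (Y:ℝ) := by exact_mod_cast hm.2
        _ ≤ y := Nat.floor_le hypos.le
  have hxoverm : ∀ m ∈ Finset.Icc 1 Y, Real.sqrt x ≤ x / m ∧ Real.sqrt x * L^2 ≤ x / m := by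
    intro m hm
    obtain ⟨hm1, hmy⟩ := hmfacts m hm
    have hmpos : (0:ℝ) < m := by linarith
    have hmsx : (m:ℝ) ≤ Real.sqrt x := le_trans hmy hysx
    have h1 : x / Real.sqrt x ≤ x / m := by
      apply div_le_div_of_nonneg_left hxpos.le hmpos hmsx
    have h2 : x / Real.sqrt x = Real.sqrt x := Real.div_sqrt
    have h3 : x / y ≤ x / m := by
      apply div_le_div_of_nonneg_left hxpos.le hmpos hmy
    have h4 : x / y = Real.sqrt x * L^2 := by
      rw [hy]
      rw [div_div_eq_mul_div, div_eq_iff (ne_of_gt hsxpos)]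
      rw [mul_comm (Real.sqrt x) (L^2), mul_assoc]
      rw [Real.mul_self_sqrt hxpos.le]
      ring
    exact ⟨by linarith, by linarith⟩
  -- the inner sum bound
  have inner_ge : ∀ m ∈ Finset.Icc 1 Y,
      (c/2) * (x / m) / L ≤ ∑ p ∈ PN ⌊x / m⌋₊ \ PN ⌊Real.sqrt x⌋₊, g p := by
    intro m hm
    obtain ⟨hm1, hmy⟩ := hmfacts m hm
    obtain ⟨hsx_xm, hsxL_xm⟩ := hxoverm m hm
    have hmpos : (0:ℝ) < m := by linarith
    have hsub : PN ⌊Real.sqrt x⌋₊ ⊆ PN ⌊x / m⌋₊ := PN_mono (Nat.floor_le_floor hsx_xm)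
    -- Chebyshev bound for A(√x)
    have chebA : ∑ p ∈ PN ⌊Real.sqrt x⌋₊, g p * Real.log p ≤ β * Real.log 4 * Real.sqrt x := by
      calc ∑ p ∈ PN ⌊Real.sqrt x⌋₊, g p * Real.log p
          ≤ ∑ p ∈ PN ⌊Real.sqrt x⌋₊, β * Real.log p := by
            apply Finset.sum_le_sum
            intro p hp
            have h1 := Real.log_natCast_nonneg p
            have h2 := hgp p (mem_PN.mp hp).1
            nlinarith
        _ = β * ∑ p ∈ PN ⌊Real.sqrt x⌋₊, Real.log p := by rw [Finset.mul_sum]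
        _ ≤ β * ((⌊Real.sqrt x⌋₊ : ℝ) * Real.log 4) := by
            apply mul_le_mul_of_nonneg_left (chebyshev _) (by linarith)
        _ = β * Real.log 4 * ((⌊Real.sqrt x⌋₊:ℕ):ℝ) := by ring
        _ ≤ β * Real.log 4 * Real.sqrt x := by
            have h1 : ((⌊Real.sqrt x⌋₊:ℕ):ℝ) ≤ Real.sqrt x := Nat.floor_le hsxpos.le
            have h2 : (0:ℝ) ≤ Real.log 4 := Real.log_nonneg (by norm_num)
            exact mul_le_mul_of_nonneg_left h1 (mul_nonneg (by linarith) h2)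
    have Alow : c * (x/m) ≤ ∑ p ∈ PN ⌊x/m⌋₊, g p * Real.log p :=
      hlow _ (le_trans hx0 hsx_xm)
    have hdiffA : ∑ p ∈ PN ⌊x/m⌋₊ \ PN ⌊Real.sqrt x⌋₊, g p * Real.log p
        = ∑ p ∈ PN ⌊x/m⌋₊, g p * Real.log p - ∑ p ∈ PN ⌊Real.sqrt x⌋₊, g p * Real.log p :=
      Finset.sum_sdiff_eq_sub hsub
    have half : (c/2) * (x/m) ≤ ∑ p ∈ PN ⌊x/m⌋₊ \ PN ⌊Real.sqrt x⌋₊, g p * Real.log p := by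
      rw [hdiffA]
      have key : β * Real.log 4 * Real.sqrt x ≤ (c/2) * (x/m) := by
        have h1 : β * Real.log 4 ≤ (c/2) * L^2 := by linarith
        have h2 : β * Real.log 4 * Real.sqrt x ≤ (c/2) * L^2 * Real.sqrt x := by
          nlinarith
        calc β * Real.log 4 * Real.sqrt x ≤ (c/2) * L^2 * Real.sqrt x := h2
          _ = (c/2) * (Real.sqrt x * L^2) := by ring
          _ ≤ (c/2) * (x/m) := by nlinarith
      linarith
    -- replace log p by log x
    have hlogp_le : ∀ p ∈ PN ⌊x/m⌋₊ \ PN ⌊Real.sqrt x⌋₊, g p * Real.log p ≤ g p * L := by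
      intro p hp
      rw [Finset.mem_sdiff] at hp
      have hple : (p:ℝ) ≤ ⌊x/m⌋₊ := by exact_mod_cast (mem_PN.mp hp.1).2
      have hfl : ((⌊x/m⌋₊:ℕ):ℝ) ≤ x/m := Nat.floor_le (by positivity)
      have hxm_x : x / m ≤ x := by
        rw [div_le_iff₀ hmpos]; nlinarith
      have hp2' : 2 ≤ p := (mem_PN.mp hp.1).1.two_le
      have hlogle : Real.log p ≤ L := by
        rw [hL]
        apply Real.log_le_log (by positivity)
        linarith
      have := hg0 p
      nlinarith
    have sum_ge : ∑ p ∈ PN ⌊x/m⌋₊ \ PN ⌊Real.sqrt x⌋₊, g p * Real.log p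
        ≤ L * ∑ p ∈ PN ⌊x/m⌋₊ \ PN ⌊Real.sqrt x⌋₊, g p := by
      rw [Finset.mul_sum]
      apply Finset.sum_le_sum
      intro p hp
      have := hlogp_le p hp
      linarith [this]
    rw [div_le_iff₀ hLpos]
    calc c / 2 * (x / ↑m) ≤ L * ∑ p ∈ PN ⌊x / ↑m⌋₊ \ PN ⌊Real.sqrt x⌋₊, g p :=
          le_trans half sum_ge
      _ = (∑ p ∈ PN ⌊x / ↑m⌋₊ \ PN ⌊Real.sqrt x⌋₊, g p) * L := mul_comm _ _
  -- the sigma set of pairs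
  set T : Finset ((_ : ℕ) × ℕ) :=
    (Finset.Icc 1 Y).sigma (fun m => PN ⌊x / m⌋₊ \ PN ⌊Real.sqrt x⌋₊) with hT
  have hq_facts : ∀ q ∈ T, 1 ≤ q.1 ∧ (q.1:ℝ) ≤ Real.sqrt x ∧ q.2.Prime ∧
      Real.sqrt x < (q.2:ℝ) ∧ (q.2:ℝ) ≤ x / q.1 := by
    intro q hq
    rw [hT, Finset.mem_sigma] at hq
    obtain ⟨hm, hp⟩ := hq
    obtain ⟨hm1, hmy⟩ := hmfacts q.1 hm
    rw [Finset.mem_sdiff] at hp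
    have hprime : q.2.Prime := (mem_PN.mp hp.1).1
    have hpgt : Real.sqrt x < (q.2:ℝ) := by
      have h1 : ¬ (q.2 ≤ ⌊Real.sqrt x⌋₊) := by
        intro hle
        exact hp.2 (mem_PN.mpr ⟨hprime, hle⟩)
      push_neg at h1
      have := (Nat.floor_lt hsxpos.le).mp h1
      exact this
    have hple : (q.2:ℝ) ≤ x / q.1 := by
      have h1 : (q.2:ℝ) ≤ (⌊x / q.1⌋₊:ℝ) := by exact_mod_cast (mem_PN.mp hp.1).2
      have h2 : ((⌊x / q.1⌋₊:ℕ):ℝ) ≤ x / q.1 := Nat.floor_le (by positivity)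
      linarith
    exact ⟨by exact_mod_cast hm1, le_trans hmy hysx, hprime, hpgt, hple⟩
  have hnotdvd : ∀ q ∈ T, ¬ (q.2 ∣ q.1) := by
    intro q hq hdvd
    obtain ⟨hm1, hmsx, hprime, hpgt, _⟩ := hq_facts q hq
    have h1 : q.2 ≤ q.1 := Nat.le_of_dvd (by omega) hdvd
    have h2 : (q.2:ℝ) ≤ (q.1:ℝ) := by exact_mod_cast h1
    linarith
  have hinj : ∀ a ∈ T, ∀ b ∈ T, a.1 * a.2 = b.1 * b.2 → a = b := by
    intro a ha b hb hab
    obtain ⟨ha1, hasx, hap, hagt, -⟩ := hq_facts a ha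
    obtain ⟨hb1, hbsx, hbp, hbgt, -⟩ := hq_facts b hb
    have hdvd : a.2 ∣ b.1 * b.2 := by rw [← hab]; exact dvd_mul_left a.2 a.1
    have hpp : a.2 = b.2 := by
      rcases (Nat.Prime.dvd_mul hap).mp hdvd with h | h
      · exfalso
        have h1 : a.2 ≤ b.1 := Nat.le_of_dvd (by omega) h
        have h2 : (a.2:ℝ) ≤ (b.1:ℝ) := by exact_mod_cast h1
        linarith
      · exact (Nat.prime_dvd_prime_iff_eq hap hbp).mp h
    have hmm : a.1 = b.1 := by
      apply Nat.eq_of_mul_eq_mul_right hap.pos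
      rw [hab, hpp]
    obtain ⟨m₁, p₁⟩ := a
    obtain ⟨m₂, p₂⟩ := b
    simp only at hpp hmm
    subst hpp
    subst hmm
    rfl
  have himg : T.image (fun q => q.1 * q.2) ⊆ Finset.Icc 1 ⌊x⌋₊ := by
    intro n hn
    rw [Finset.mem_image] at hn
    obtain ⟨q, hq, rfl⟩ := hn
    obtain ⟨hm1, hmsx, hprime, hpgt, hple⟩ := hq_facts q hq
    rw [Finset.mem_Icc]
    constructor
    · exact Nat.mul_pos (by omega) hprime.pos
    · apply Nat.le_floor
      have hmpos : (0:ℝ) < q.1 := by exact_mod_cast by omega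
      have : (q.1:ℝ) * (q.2:ℝ) ≤ (q.1:ℝ) * (x / q.1) :=
        mul_le_mul_of_nonneg_left hple hmpos.le
      calc ((q.1 * q.2 : ℕ):ℝ) = (q.1:ℝ) * (q.2:ℝ) := by push_cast; ring
        _ ≤ (q.1:ℝ) * (x / q.1) := this
        _ = x := by field_simp
  have hgsplit : ∀ q ∈ T, g (q.1 * q.2) = g q.1 * g q.2 := by
    intro q hq
    obtain ⟨hm1, _, hprime, _, _⟩ := hq_facts q hq
    apply hgm
    exact Nat.Coprime.symm ((Nat.Prime.coprime_iff_not_dvd hprime).mpr (hnotdvd q hq))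
  calc (c/2) * (x / L) * ∑ m ∈ Finset.Icc 1 Y, g m / m
      = ∑ m ∈ Finset.Icc 1 Y, g m * ((c/2) * (x / m) / L) := by
        rw [Finset.mul_sum]
        apply Finset.sum_congr rfl
        intro m hm
        obtain ⟨hm1, _⟩ := hmfacts m hm
        have hmne : (m:ℝ) ≠ 0 := by linarith
        field_simp
    _ ≤ ∑ m ∈ Finset.Icc 1 Y, g m * ∑ p ∈ PN ⌊x / m⌋₊ \ PN ⌊Real.sqrt x⌋₊, g p := by
        apply Finset.sum_le_sum
        intro m hm
        exact mul_le_mul_of_nonneg_left (inner_ge m hm) (hg0 m)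
    _ = ∑ m ∈ Finset.Icc 1 Y, ∑ p ∈ PN ⌊x / m⌋₊ \ PN ⌊Real.sqrt x⌋₊, g m * g p := by
        apply Finset.sum_congr rfl
        intro m _
        rw [Finset.mul_sum]
    _ = ∑ q ∈ T, g (q.1 * q.2) := by
        rw [hT, Finset.sum_sigma]
        apply Finset.sum_congr rfl
        intro m hm
        apply Finset.sum_congr rfl
        intro p hp
        exact (hgsplit ⟨m, p⟩ (by rw [hT, Finset.mem_sigma]; exact ⟨hm, hp⟩)).symm
    _ = ∑ n ∈ T.image (fun q => q.1 * q.2), g n := by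
        rw [Finset.sum_image hinj]
    _ ≤ ∑ n ∈ Finset.Icc 1 ⌊x⌋₊, g n :=
        Finset.sum_le_sum_of_subset_of_nonneg himg (fun n _ _ => hg0 n)

/-- tail of the sum of `g p / p` between `z` and `x` -/
lemma T_tail (g : ℕ → ℝ) (β : ℝ) (hβ : 1 ≤ β)
    (hg0 : ∀ n, 0 ≤ g n) (hgp : ∀ p : ℕ, p.Prime → g p ≤ β)
    (z x : ℝ) (hz1 : 1 < z) (hzx : z ≤ x) :
    ∑ p ∈ PN ⌊x⌋₊, g p / p
      ≤ ∑ p ∈ PN ⌊z⌋₊, g p / p + β / Real.log z * (Real.log x + Real.log 4) := by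
  have hzpos : (0:ℝ) < z := by linarith
  have hlogz : 0 < Real.log z := Real.log_pos hz1
  have hfx : 1 ≤ ⌊x⌋₊ := Nat.le_floor (by exact_mod_cast le_trans hz1.le hzx)
  have hsub : PN ⌊z⌋₊ ⊆ PN ⌊x⌋₊ := PN_mono (Nat.floor_le_floor hzx)
  have hsplit : ∑ p ∈ PN ⌊x⌋₊ \ PN ⌊z⌋₊, g p / p
      = ∑ p ∈ PN ⌊x⌋₊, g p / p - ∑ p ∈ PN ⌊z⌋₊, g p / p :=
    Finset.sum_sdiff_eq_sub hsub
  have hdiff : ∑ p ∈ PN ⌊x⌋₊ \ PN ⌊z⌋₊, g p / p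
      ≤ β / Real.log z * (Real.log x + Real.log 4) := by
    have hterm : ∀ p ∈ PN ⌊x⌋₊ \ PN ⌊z⌋₊, g p / p ≤ β / Real.log z * (Real.log p / p) := by
      intro p hp
      rw [Finset.mem_sdiff] at hp
      have hprime : p.Prime := (mem_PN.mp hp.1).1
      have hp2 : 2 ≤ p := hprime.two_le
      have hppos : (0:ℝ) < p := by positivity
      have hpz : z < (p:ℝ) := by
        have h1 : ¬ (p ≤ ⌊z⌋₊) := fun hle => hp.2 (mem_PN.mpr ⟨hprime, hle⟩)
        push_neg at h1
        exact (Nat.floor_lt hzpos.le).mp h1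
      have hlogp : Real.log z ≤ Real.log p := Real.log_le_log hzpos hpz.le
      have hgpb := hgp p hprime
      have hlogppos : 0 < Real.log p := lt_of_lt_of_le hlogz hlogp
      rw [show β / Real.log z * (Real.log ↑p / ↑p) = β * Real.log ↑p / ↑p / Real.log z from by
            ring,
        le_div_iff₀ hlogz,
        show g p / ↑p * Real.log z = g p * Real.log z / ↑p from by ring]
      have h3 : g p * Real.log z ≤ β * Real.log p := by nlinarith [hg0 p]
      gcongr
    calc ∑ p ∈ PN ⌊x⌋₊ \ PN ⌊z⌋₊, g p / p
        ≤ ∑ p ∈ PN ⌊x⌋₊ \ PN ⌊z⌋₊, β / Real.log z * (Real.log p / p) :=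
          Finset.sum_le_sum hterm
      _ = β / Real.log z * ∑ p ∈ PN ⌊x⌋₊ \ PN ⌊z⌋₊, Real.log p / p := by
          rw [Finset.mul_sum]
      _ ≤ β / Real.log z * ∑ p ∈ PN ⌊x⌋₊, Real.log p / p := by
          apply mul_le_mul_of_nonneg_left _ (by positivity)
          apply Finset.sum_le_sum_of_subset_of_nonneg (Finset.sdiff_subset)
          intro p hp _
          have hp2 : 2 ≤ p := (mem_PN.mp hp).1.two_le
          have h1 := Real.log_natCast_nonneg p
          positivity
      _ ≤ β / Real.log z * (Real.log x + Real.log 4) := by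
          apply mul_le_mul_of_nonneg_left _ (by positivity)
          refine le_trans (mertens1 ⌊x⌋₊ hfx) ?_
          have h1 : Real.log (⌊x⌋₊:ℝ) ≤ Real.log x := by
            apply Real.log_le_log (by exact_mod_cast hfx)
            exact Nat.floor_le (by linarith)
          linarith
  linarith [hsplit, hdiff]

end Aux

set_option maxHeartbeats 1000000 in
theorem stmt2 (g : ℕ → ℝ) (β c : ℝ) (hβ : 1 ≤ β) (hc : 0 < c)
    (hg0 : ∀ n, 0 ≤ g n) (hg1 : g 1 = 1)
    (hgm : ∀ m n : ℕ, Nat.Coprime m n → g (m * n) = g m * g n)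
    (hgp : ∀ p : ℕ, p.Prime → g p ≤ β)
    (hsum : Summable (fun q : ℕ => if IsPrimePow q ∧ ¬ q.Prime then g q / q else 0))
    (hlow : ∃ x₀ : ℝ, ∀ x : ℝ, x₀ ≤ x →
      c * x ≤ ∑ p ∈ (Finset.range (⌊x⌋₊ + 1)).filter Nat.Prime, g p * Real.log p) :
    ∃ C > (0:ℝ), ∀ x : ℝ, 1 ≤ x →
      C * x * Real.exp (- ∑ p ∈ (Finset.range (⌊x⌋₊ + 1)).filter Nat.Prime, (1 - g p) / p) ≤
        ∑ n ∈ Finset.Icc 1 ⌊x⌋₊, g n := by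
  classical
  obtain ⟨x₀, hlow⟩ := hlow
  have hlow' : ∀ t : ℝ, x₀ ≤ t → c * t ≤ ∑ p ∈ PN ⌊t⌋₊, g p * Real.log p := hlow
  have hexp1 : (2:ℝ) ≤ Real.exp 1 := by have h := Real.add_one_le_exp 1; linarith only [h]
  set K : ℕ := ⌈2 * Real.exp 1 * β + 1⌉₊ with hKdef
  have hK : 2 * Real.exp 1 * β + 1 ≤ (K:ℝ) := Nat.le_ceil _
  have hK1 : (1:ℝ) ≤ K := by nlinarith only [hK, hexp1, hβ]
  have hKpos : (0:ℝ) < K := by linarith only [hK1]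
  set Rc : ℝ := max (max 1024 (8*(K:ℝ))) (2*β*Real.log 4/c) with hRc
  have hRc1024 : (1024:ℝ) ≤ Rc := le_trans (le_max_left _ _) (le_max_left _ _)
  have hRc8K : 8*(K:ℝ) ≤ Rc := le_trans (le_max_right _ _) (le_max_left _ _)
  have hRcc : 2*β*Real.log 4/c ≤ Rc := le_max_right _ _
  set X₀ : ℝ := max (Real.exp Rc) ((max x₀ 1)^2) with hX₀
  have hX₀pos : 0 < X₀ := lt_of_lt_of_le (Real.exp_pos Rc) (le_max_left _ _)
  have hX₀1 : (1:ℝ) ≤ X₀ := by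
    refine le_trans ?_ (le_max_right _ _)
    have h1 : (1:ℝ) ≤ max x₀ 1 := le_max_right _ _
    nlinarith only [h1]
  set C₁ : ℝ := (c/8) * Real.exp (-β^2 - 8*β*K) with hC₁
  have hC₁pos : 0 < C₁ := by positivity
  set PX : ℝ := ∑ p ∈ PN ⌊X₀⌋₊, 1/(p:ℝ) with hPX
  have hPXnonneg : 0 ≤ PX := Finset.sum_nonneg (fun p hp => by
    have := (mem_PN.mp hp).1.two_le; positivity)
  set C₂ : ℝ := Real.exp (-((β-1)*PX)) / X₀ with hC₂
  have hC₂pos : 0 < C₂ := by positivity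
  refine ⟨min C₁ C₂, lt_min hC₁pos hC₂pos, ?_⟩
  intro x hx1
  have hxpos : (0:ℝ) < x := by linarith only [hx1]
  have hfloor1 : 1 ≤ ⌊x⌋₊ := Nat.le_floor (by exact_mod_cast hx1)
  have hSsplit : - ∑ p ∈ PN ⌊x⌋₊, (1 - g p) / p
      = (∑ p ∈ PN ⌊x⌋₊, g p / p) - (∑ p ∈ PN ⌊x⌋₊, 1/(p:ℝ)) := by
    have hS1 : ∑ p ∈ PN ⌊x⌋₊, (1 - g p) / p
        = (∑ p ∈ PN ⌊x⌋₊, 1/(p:ℝ)) - (∑ p ∈ PN ⌊x⌋₊, g p / p) := by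
      rw [← Finset.sum_sub_distrib]
      exact Finset.sum_congr rfl (fun p _ => sub_div _ _ _)
    rw [hS1]
    ring
  have hG1 : (1:ℝ) ≤ ∑ n ∈ Finset.Icc 1 ⌊x⌋₊, g n := by
    have h1mem : 1 ∈ Finset.Icc 1 ⌊x⌋₊ := Finset.mem_Icc.mpr ⟨le_refl 1, hfloor1⟩
    calc (1:ℝ) = g 1 := hg1.symm
      _ ≤ ∑ n ∈ Finset.Icc 1 ⌊x⌋₊, g n :=
        Finset.single_le_sum (fun n _ => hg0 n) h1mem
  rcases le_or_gt X₀ x with hbig | hsmall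
  · -- main case : x large
    set L : ℝ := Real.log x with hL
    have hLRc : Rc ≤ L := by
      rw [hL]
      calc Rc = Real.log (Real.exp Rc) := (Real.log_exp Rc).symm
        _ ≤ Real.log x := Real.log_le_log (Real.exp_pos _) (le_trans (le_max_left _ _) hbig)
    have hL1024 : (1024:ℝ) ≤ L := le_trans hRc1024 hLRc
    have hL8K : 8*(K:ℝ) ≤ L := le_trans hRc8K hLRc
    have hLc : 2*β*Real.log 4/c ≤ L := le_trans hRcc hLRc
    have hLpos : 0 < L := by linarith only [hL1024]
    have hx2 : (2:ℝ) ≤ x := by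
      have h1 : Real.exp 1024 ≤ Real.exp L := Real.exp_le_exp.mpr hL1024
      have h2 : Real.exp L = x := by rw [hL, Real.exp_log hxpos]
      have h3 : (1025:ℝ) ≤ Real.exp 1024 := by
        have h := Real.add_one_le_exp (1024:ℝ); linarith only [h]
      linarith only [h1, h2, h3]
    have hsxpos : 0 < Real.sqrt x := Real.sqrt_pos.mpr hxpos
    set y : ℝ := Real.sqrt x / L^2 with hy
    have hypos : 0 < y := by positivity
    have hlogL : Real.log L ≤ L/16 := by
      have hsL : (32:ℝ) ≤ Real.sqrt L := by
        rw [show (32:ℝ) = Real.sqrt 1024 from by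
          rw [show (1024:ℝ) = 32^2 from by norm_num, Real.sqrt_sq (by norm_num)]]
        exact Real.sqrt_le_sqrt hL1024
      have h1 : Real.log L = 2 * Real.log (Real.sqrt L) := by
        rw [Real.log_sqrt hLpos.le]; ring
      have h2 : Real.log (Real.sqrt L) ≤ Real.sqrt L - 1 :=
        Real.log_le_sub_one_of_pos (by positivity)
      have h3 : Real.sqrt L * Real.sqrt L = L := Real.mul_self_sqrt hLpos.le
      nlinarith only [hsL, h1, h2, h3]
    have hlogy : Real.log y = L/2 - 2*Real.log L := by
      rw [hy, Real.log_div (by positivity) (by positivity), Real.log_sqrt hxpos.le,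
        Real.log_pow]
      push_cast
      rw [hL]
    have hlogy4 : L/4 ≤ Real.log y := by
      rw [hlogy]; linarith only [hlogL, hL1024]
    have hlogy2K : 2*(K:ℝ) ≤ Real.log y := by
      rw [hlogy]; linarith only [hlogL, hL8K]
    have hy1 : (1:ℝ) ≤ y := by
      by_contra h
      push_neg at h
      have h2 := Real.log_nonpos hypos.le h.le
      linarith only [h2, hlogy2K, hKpos]
    set z : ℝ := y^((1:ℝ)/(K:ℝ)) with hz
    have hzpos : 0 < z := Real.rpow_pos_of_pos hypos _
    have hlogz : Real.log z = Real.log y / K := by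
      rw [hz, Real.log_rpow hypos]; ring
    have hlogzpos : 0 < Real.log z := by
      rw [hlogz]
      apply div_pos _ hKpos
      linarith only [hlogy4, hL1024]
    have hz1 : 1 < z := by
      by_contra h
      push_neg at h
      have h2 := Real.log_nonpos hzpos.le h
      linarith only [h2, hlogzpos]
    have hzy : z ≤ y := by
      rw [hz]
      calc y^((1:ℝ)/(K:ℝ)) ≤ y^(1:ℝ) := by
            apply Real.rpow_le_rpow_of_exponent_le hy1
            rw [div_le_one hKpos]
            exact hK1
        _ = y := Real.rpow_one y
    have hysx : y ≤ Real.sqrt x := by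
      rw [hy]
      apply div_le_self hsxpos.le
      nlinarith only [hL1024]
    have hzx : z ≤ x := by
      calc z ≤ y := hzy
        _ ≤ Real.sqrt x := hysx
        _ ≤ x := by
          have h5 : Real.sqrt x ≤ Real.sqrt (x^2) := Real.sqrt_le_sqrt (by nlinarith only [hx1])
          rwa [Real.sqrt_sq (by linarith only [hx1] : (0:ℝ) ≤ x)] at h5
    have hLy := L_lower g β hβ hg0 hg1 hgm hgp K (by exact_mod_cast hK) y hypos hlogy2K
    have hGy := G_lower g β c hβ hc hg0 hgm hgp x₀ hlow' x hx2 (by linarith only [hL1024])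
      (by
        calc x₀ ≤ max x₀ 1 := le_max_left _ _
          _ ≤ Real.sqrt x := by
            rw [show max x₀ 1 = Real.sqrt ((max x₀ 1)^2) from by
              rw [Real.sqrt_sq (le_trans zero_le_one (le_max_right _ _))]]
            apply Real.sqrt_le_sqrt
            exact le_trans (le_max_right _ _) hbig)
      (by
        rw [div_le_iff₀ hc] at hLc
        have h2 : L * c ≤ c * L^2 := by
          have h1L : (1:ℝ) ≤ L := by linarith only [hL1024]
          have h5 := mul_le_mul_of_nonneg_left h1L (mul_nonneg hc.le hLpos.le)
          nlinarith only [h5]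
        linarith only [hLc, h2])
    have hTt := T_tail g β hβ hg0 hgp z x hz1 hzx
    have htail : β / Real.log z * (Real.log x + Real.log 4) ≤ 8*β*K := by
      have h1 : Real.log x + Real.log 4 ≤ 2*L := by
        have h1a := log_four_le_two
        rw [← hL]
        linarith only [h1a, hL1024]
      have h2 : L/(4*(K:ℝ)) ≤ Real.log z := by
        rw [hlogz, div_le_div_iff₀ (by positivity) hKpos]
        have h3 := mul_le_mul_of_nonneg_right hlogy4 (show (0:ℝ) ≤ 4*(K:ℝ) by positivity)
        calc L*(K:ℝ) = L/4*(4*(K:ℝ)) := by ring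
          _ ≤ Real.log y*(4*(K:ℝ)) := h3
          _ = Real.log y * (4*(K:ℝ)) := rfl
      have h3 : β / Real.log z ≤ 4*β*(K:ℝ)/L := by
        rw [div_le_div_iff₀ hlogzpos hLpos]
        have h4 := mul_le_mul_of_nonneg_left h2 (show (0:ℝ) ≤ 4*β*(K:ℝ) by positivity)
        calc β * L = 4*β*(K:ℝ) * (L/(4*(K:ℝ))) := by field_simp
          _ ≤ 4*β*(K:ℝ) * Real.log z := h4
      calc β / Real.log z * (Real.log x + Real.log 4)
          ≤ (4*β*(K:ℝ)/L) * (2*L) := by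
            apply mul_le_mul h3 h1 (by positivity) (by positivity)
        _ = 8*β*(K:ℝ) := by field_simp; ring
    have hTz : (∑ p ∈ PN ⌊x⌋₊, g p / p) - 8*β*K ≤ ∑ p ∈ PN ⌊z⌋₊, g p / p := by
      linarith only [hTt, htail]
    have hmert := mertens2 x hx1
    have hexpP : Real.exp (-(∑ p ∈ PN ⌊x⌋₊, 1/(p:ℝ))) ≤ 2/L := by
      rw [Real.exp_neg, inv_le_comm₀ (Real.exp_pos _) (by positivity)]
      rw [show ((2:ℝ)/L)⁻¹ = L/2 from by rw [inv_div]]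
      rw [hL]
      linarith only [hmert]
    set T : ℝ := ∑ p ∈ PN ⌊x⌋₊, g p / p with hT
    set P : ℝ := ∑ p ∈ PN ⌊x⌋₊, 1/(p:ℝ) with hP
    have key : min C₁ C₂ * x * Real.exp (T - P)
        ≤ ∑ n ∈ Finset.Icc 1 ⌊x⌋₊, g n := by
      have e1 : (0:ℝ) ≤ Real.exp T * Real.exp (-P) := by positivity
      have e3 : Real.exp T * Real.exp (-P) ≤ Real.exp T * (2/L) :=
        mul_le_mul_of_nonneg_left hexpP (Real.exp_pos T).le
      have e4 : min C₁ C₂ * x ≤ C₁ * x :=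
        mul_le_mul_of_nonneg_right (min_le_left _ _) hxpos.le
      have s1 : min C₁ C₂ * x * Real.exp (T - P) ≤ C₁ * x * (Real.exp T * (2/L)) := by
        rw [Real.exp_sub, div_eq_mul_inv (Real.exp T), ← Real.exp_neg]
        exact mul_le_mul e4 e3 e1 (by positivity)
      have hE : Real.exp (-β^2) * Real.exp (T - 8*β*(K:ℝ))
          = Real.exp (-β^2 - 8*β*(K:ℝ)) * Real.exp T := by
        rw [← Real.exp_add, ← Real.exp_add]
        congr 1
        ring
      have s2 : C₁ * x * (Real.exp T * (2/L))
          = (c/4) * (x/L) * (Real.exp (-β^2) * Real.exp (T - 8*β*(K:ℝ))) := by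
        rw [hC₁, hE]
        field_simp [hLpos.ne']
        ring
      have s3 : Real.exp (T - 8*β*(K:ℝ)) ≤ Real.exp (∑ p ∈ PN ⌊z⌋₊, g p / p) :=
        Real.exp_le_exp.mpr hTz
      have s4 : (c/4) * (x/L) * (Real.exp (-β^2) * Real.exp (T - 8*β*(K:ℝ)))
          ≤ (c/4) * (x/L) * (Real.exp (-β^2) * Real.exp (∑ p ∈ PN ⌊z⌋₊, g p / p)) := by
        apply mul_le_mul_of_nonneg_left _ (by positivity)
        exact mul_le_mul_of_nonneg_left s3 (Real.exp_pos _).le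
      have s5 : (c/4) * (x/L) * (Real.exp (-β^2) * Real.exp (∑ p ∈ PN ⌊z⌋₊, g p / p))
          ≤ (c/2) * (x/L) * ∑ m ∈ Finset.Icc 1 ⌊y⌋₊, g m / m := by
        calc (c/4) * (x/L) * (Real.exp (-β^2) * Real.exp (∑ p ∈ PN ⌊z⌋₊, g p / p))
            = (c/2) * (x/L) * ((1/2) * Real.exp (-β^2) * Real.exp (∑ p ∈ PN ⌊z⌋₊, g p / p)) := by
              ring
          _ ≤ (c/2) * (x/L) * ∑ m ∈ Finset.Icc 1 ⌊y⌋₊, g m / m :=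
              mul_le_mul_of_nonneg_left hLy (by positivity)
      calc min C₁ C₂ * x * Real.exp (T - P)
          ≤ C₁ * x * (Real.exp T * (2/L)) := s1
        _ = (c/4) * (x/L) * (Real.exp (-β^2) * Real.exp (T - 8*β*(K:ℝ))) := s2
        _ ≤ (c/4) * (x/L) * (Real.exp (-β^2) * Real.exp (∑ p ∈ PN ⌊z⌋₊, g p / p)) := s4
        _ ≤ (c/2) * (x/L) * ∑ m ∈ Finset.Icc 1 ⌊y⌋₊, g m / m := s5
        _ ≤ ∑ n ∈ Finset.Icc 1 ⌊x⌋₊, g n := hGy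
    calc min C₁ C₂ * x * Real.exp (- ∑ p ∈ PN ⌊x⌋₊, (1 - g p) / p)
        = min C₁ C₂ * x * Real.exp (T - P) := by rw [hSsplit]
      _ ≤ ∑ n ∈ Finset.Icc 1 ⌊x⌋₊, g n := key
  · -- small case : x < X₀
    have hPmono : ∑ p ∈ PN ⌊x⌋₊, 1/(p:ℝ) ≤ PX := by
      rw [hPX]
      apply Finset.sum_le_sum_of_subset_of_nonneg
      · exact PN_mono (Nat.floor_le_floor hsmall.le)
      · intro p hp _
        have := (mem_PN.mp hp).1.two_le
        positivity
    have hTleβP : ∑ p ∈ PN ⌊x⌋₊, g p / p ≤ β * ∑ p ∈ PN ⌊x⌋₊, 1/(p:ℝ) := by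
      rw [Finset.mul_sum]
      apply Finset.sum_le_sum
      intro p hp
      have hp2 := (mem_PN.mp hp).1.two_le
      have hppos : (0:ℝ) < p := by positivity
      calc g p / p ≤ β / p := by
            gcongr
            exact hgp p (mem_PN.mp hp).1
        _ = β * (1/(p:ℝ)) := by ring
    have hexpS : Real.exp (- ∑ p ∈ PN ⌊x⌋₊, (1 - g p) / p) ≤ Real.exp ((β-1)*PX) := by
      rw [hSsplit, Real.exp_le_exp]
      have h2 : (0:ℝ) ≤ β - 1 := by linarith only [hβ]
      have h3 : (0:ℝ) ≤ ∑ p ∈ PN ⌊x⌋₊, 1/(p:ℝ) := Finset.sum_nonneg (fun p hp => by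
        have := (mem_PN.mp hp).1.two_le
        positivity)
      have hmul := mul_le_mul_of_nonneg_left hPmono h2
      linarith only [hTleβP, hmul, h3]
    have e3 : min C₁ C₂ * x ≤ C₂ * X₀ :=
      mul_le_mul (min_le_right _ _) hsmall.le hxpos.le hC₂pos.le
    calc min C₁ C₂ * x * Real.exp (- ∑ p ∈ PN ⌊x⌋₊, (1 - g p) / p)
        ≤ C₂ * X₀ * Real.exp ((β-1)*PX) :=
          mul_le_mul e3 hexpS (Real.exp_pos _).le (by positivity)
      _ = 1 := by
          rw [hC₂, div_mul_cancel₀ _ (ne_of_gt hX₀pos), ← Real.exp_add]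
          simp
      _ ≤ ∑ n ∈ Finset.Icc 1 ⌊x⌋₊, g n := hG1
end

section
/- Let g be an exponentially multiplicative function (g(p^k) = g(p)^k/k!) with |g(p)| ≤ β on primes, and let G(s) = ∑_{n≥1} g(n) n^{-s} = exp(∑_p g(p) p^{-s}) for Re(s) > 1, G₀(σ) = ∑_{n≥1} |g(n)| n^{-σ}. Then for 1 < σ ≤ 2 and y = exp(1/(σ−1)), |G(s)| ≪ G₀(σ) · exp(−∑_{p ≤ y} (|g(p)| − Re(g(p) p^{-it})) p^{-1}), where s = σ + it, with implied constant depending only on β. -/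
open Finset Real

/-!
The Euler product turns exponential multiplicativity into `G(s) = exp (∑_p g(p) p^{-s})` and
`G₀(σ) = exp (∑_p |g(p)| p^{-σ})`, hence
`|G(s)| = G₀(σ) · exp (-∑_p (|g(p)| - Re (g(p) p^{-it})) p^{-σ})`, a sum of nonnegative terms.
Dropping the primes `p > y` and replacing `p^{-σ}` by `p^{-1}` for `p ≤ y` costs at most
`2β ∑_{p ≤ y} (1 - p^{1-σ}) / p ≤ 2β (σ - 1) ∑_{p ≤ y} log p / p`, and Chebyshev's bound
`θ(x) ≤ x log 4` with partial summation gives `∑_{p ≤ y} log p / p ≤ log 4 (2 + log y)`,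
which is `O(1 / (σ - 1))` for `y = exp (1 / (σ - 1))`.
-/

lemma Chebyshev.theta_natCast_eq_sum_range (n : ℕ) :
    Chebyshev.theta n = ∑ p ∈ range (n + 1) with p.Prime, log p := by
  rw [Chebyshev.theta_eq_sum_Icc, Nat.floor_natCast, Nat.range_succ_eq_Icc_zero]

lemma Chebyshev.inv_sub_inv_mul_theta_le (n : ℕ) :
    ((n : ℝ)⁻¹ - ((n + 1 : ℕ) : ℝ)⁻¹) * Chebyshev.theta n ≤ log 4 / (n + 1) := by
  rcases Nat.eq_zero_or_pos n with rfl | hn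
  · simp [Chebyshev.theta_zero, (log_pos (by norm_num : (1 : ℝ) < 4)).le]
  have hn' : (0 : ℝ) < n := by exact_mod_cast hn
  calc ((n : ℝ)⁻¹ - ((n + 1 : ℕ) : ℝ)⁻¹) * Chebyshev.theta n
      ≤ ((n : ℝ)⁻¹ - ((n + 1 : ℕ) : ℝ)⁻¹) * (log 4 * n) := by
        gcongr
        · rw [sub_nonneg]; gcongr; simp
        · exact Chebyshev.theta_le_log4_mul_x hn'.le
    _ = log 4 / (n + 1) := by push_cast; field_simp; ring

theorem sum_primes_log_div_le (N : ℕ) :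
    ∑ p ∈ range (N + 1) with p.Prime, log p / p ≤ log 4 * (2 + log N) := by
  have hparts := sum_range_by_parts (fun i : ℕ => (i : ℝ)⁻¹)
    (fun i => if i.Prime then log i else 0) (N + 1)
  simp only [smul_eq_mul, mul_ite, mul_zero, ← sum_filter,
    ← Chebyshev.theta_natCast_eq_sum_range, Nat.add_sub_cancel] at hparts
  have hhead : (N : ℝ)⁻¹ * Chebyshev.theta N ≤ log 4 := by
    rcases Nat.eq_zero_or_pos N with rfl | hN
    · simp [(log_pos (by norm_num : (1 : ℝ) < 4)).le]
    have hN' : (0 : ℝ) < N := by exact_mod_cast hN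
    rw [inv_mul_le_iff₀ hN', mul_comm]
    exact Chebyshev.theta_le_log4_mul_x hN'.le
  have htail : -(log 4 * (1 + log N)) ≤
      ∑ i ∈ range N, (((i + 1 : ℕ) : ℝ)⁻¹ - (i : ℝ)⁻¹) * Chebyshev.theta i := by
    rw [neg_le, ← sum_neg_distrib]
    calc _ ≤ ∑ i ∈ range N, log 4 / (i + 1) := sum_le_sum fun i _ => by
          rw [← neg_mul, neg_sub]; exact Chebyshev.inv_sub_inv_mul_theta_le i
      _ = log 4 * harmonic N := by simp [harmonic, mul_sum, div_eq_mul_inv]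
      _ ≤ log 4 * (1 + log N) := by gcongr; exact harmonic_le_one_add_log N
  calc ∑ p ∈ range (N + 1) with p.Prime, log p / p
      = ∑ p ∈ range (N + 1) with p.Prime, (p : ℝ)⁻¹ * log p := by simp only [div_eq_inv_mul]
    _ ≤ log 4 * (2 + log N) := by rw [hparts]; linarith

lemma Real.one_sub_rpow_neg_le_mul_log {x : ℝ} (hx : 0 < x) (a : ℝ) :
    1 - x ^ (-a) ≤ a * log x := by
  have := one_sub_inv_le_log_of_pos (rpow_pos_of_pos hx a)
  rwa [← rpow_neg hx.le, log_rpow hx] at this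

lemma div_sub_rpow_neg_mul_le {q E B σ : ℝ} (hq : 1 ≤ q) (hσ : 1 ≤ σ) (hE0 : 0 ≤ E)
    (hEB : E ≤ B) : E / q - q ^ (-σ) * E ≤ B * (σ - 1) * (log q / q) := by
  have hq0 : 0 < q := by linarith
  have hnonneg : 0 ≤ 1 - q ^ (-(σ - 1)) :=
    sub_nonneg.mpr (rpow_le_one_of_one_le_of_nonpos hq (by linarith))
  calc E / q - q ^ (-σ) * E = E / q * (1 - q ^ (-(σ - 1))) := by
        rw [show -σ = -(σ - 1) + -1 by ring, rpow_add hq0, rpow_neg_one]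
        ring
    _ ≤ B / q * ((σ - 1) * log q) :=
        mul_le_mul (by gcongr) (one_sub_rpow_neg_le_mul_log hq0 _) hnonneg
          (div_nonneg (hE0.trans hEB) hq0.le)
    _ = B * (σ - 1) * (log q / q) := by ring

theorem sum_primes_div_sub_rpow_neg_mul_le {E : ℕ → ℝ} {B σ : ℝ} (hσ1 : 1 < σ) (hσ2 : σ ≤ 2)
    (hE : ∀ p, p.Prime → 0 ≤ E p ∧ E p ≤ B) :
    ∑ p ∈ range (⌊rexp (1 / (σ - 1))⌋₊ + 1) with p.Prime, (E p / p - (p : ℝ) ^ (-σ) * E p) ≤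
      3 * log 4 * B := by
  set N := ⌊rexp (1 / (σ - 1))⌋₊
  have hB : 0 ≤ B := (hE 2 Nat.prime_two).1.trans (hE 2 Nat.prime_two).2
  have hN : 0 < N := Nat.floor_pos.mpr (one_le_exp (one_div_pos.mpr (sub_pos.mpr hσ1)).le)
  have hlogN : log N ≤ 1 / (σ - 1) := by
    rw [log_le_iff_le_exp (by exact_mod_cast hN)]
    exact Nat.floor_le (exp_pos _).le
  have hscale : (σ - 1) * (2 + log N) ≤ 3 := by
    have := mul_le_mul_of_nonneg_left hlogN (sub_nonneg.mpr hσ1.le)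
    rw [mul_one_div_cancel (sub_ne_zero.mpr hσ1.ne')] at this
    linarith
  calc ∑ p ∈ range (N + 1) with p.Prime, (E p / p - (p : ℝ) ^ (-σ) * E p)
      ≤ ∑ p ∈ range (N + 1) with p.Prime, B * (σ - 1) * (log p / p) := by
        refine sum_le_sum fun p hp => ?_
        have hp := (mem_filter.mp hp).2
        exact div_sub_rpow_neg_mul_le (by exact_mod_cast hp.one_le) hσ1.le (hE p hp).1 (hE p hp).2
    _ = B * (σ - 1) * ∑ p ∈ range (N + 1) with p.Prime, log p / p := by rw [mul_sum]
    _ ≤ B * (σ - 1) * (log 4 * (2 + log N)) := by gcongr; exact sum_primes_log_div_le N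
    _ = B * log 4 * ((σ - 1) * (2 + log N)) := by ring
    _ ≤ B * log 4 * 3 :=
        mul_le_mul_of_nonneg_left hscale (mul_nonneg hB (log_nonneg (by norm_num)))
    _ = 3 * log 4 * B := by ring

lemma sum_filter_prime_le_tsum {F : ℕ → ℝ} (hF : ∀ p, p.Prime → 0 ≤ F p)
    (hs : Summable fun p : Nat.Primes => F p) (s : Finset ℕ) :
    ∑ p ∈ s with p.Prime, F p ≤ ∑' p : Nat.Primes, F p := by
  rw [← sum_subtype_eq_sum_filter]
  exact hs.sum_le_tsum (ι := Nat.Primes) _ fun p _ => hF p p.2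

structure IsExpMultiplicative {𝕜 : Type*} [DivisionRing 𝕜] (f : ℕ → 𝕜) : Prop where
  map_mul_of_coprime {m n : ℕ} : m.Coprime n → f (m * n) = f m * f n
  map_prime_pow {p : ℕ} (k : ℕ) : p.Prime → f (p ^ k) = f p ^ k / k.factorial

namespace IsExpMultiplicative

lemma map_one {𝕜 : Type*} [DivisionRing 𝕜] {f : ℕ → 𝕜} (hf : IsExpMultiplicative f) :
    f 1 = 1 := by
  simpa using hf.map_prime_pow 0 Nat.prime_two

section RCLike

variable {𝕜 : Type*} [RCLike 𝕜] {f : ℕ → 𝕜}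

lemma norm (hf : IsExpMultiplicative f) : IsExpMultiplicative fun n => ‖f n‖ where
  map_mul_of_coprime h := by rw [hf.map_mul_of_coprime h, norm_mul]
  map_prime_pow k hp := by rw [hf.map_prime_pow k hp, norm_div, norm_pow, RCLike.norm_natCast]

lemma hasSum_prime_pow (hf : IsExpMultiplicative f) {p : ℕ} (hp : p.Prime) :
    HasSum (fun k => f (p ^ k)) (NormedSpace.exp (f p)) := by
  simpa only [hf.map_prime_pow _ hp] using NormedSpace.expSeries_div_hasSum_exp (f p)

lemma sum_range_norm_le (hf : IsExpMultiplicative f) (hf0 : f 0 = 0)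
    (hs : Summable fun p : Nat.Primes => ‖f p‖) (M : ℕ) :
    ∑ n ∈ range M, ‖f n‖ ≤ rexp (∑' p : Nat.Primes, ‖f p‖) := by
  obtain ⟨hsmooth, hprod⟩ := EulerProduct.summable_and_hasSum_smoothNumbers_prod_primesBelow_tsum
    (f := fun n => ‖f n‖) hf.norm.map_one hf.norm.map_mul_of_coprime
    (fun hp => by simpa using (hf.norm.hasSum_prime_pow hp).summable) M
  have hsupport : ∀ n ∈ range M, ‖f n‖ ≠ 0 → n ∈ M.smoothNumbers := fun n hn hfn =>
    Nat.mem_smoothNumbers_of_lt (Nat.pos_of_ne_zero (by rintro rfl; simp [hf0] at hfn))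
      (mem_range.mp hn)
  calc ∑ n ∈ range M, ‖f n‖ = ∑ n ∈ (range M).subtype (· ∈ M.smoothNumbers), ‖f n‖ :=
        ((sum_subtype_eq_sum_filter _).trans (sum_filter_of_ne hsupport)).symm
    _ ≤ ∑' m : M.smoothNumbers, ‖f m‖ :=
        hsmooth.of_norm.sum_le_tsum _ fun _ _ => norm_nonneg _
    _ = ∏ p ∈ M.primesBelow, rexp ‖f p‖ := by
        rw [hprod.tsum_eq, Real.exp_eq_exp_ℝ]
        exact prod_congr rfl fun p hp =>
          (hf.norm.hasSum_prime_pow (Nat.prime_of_mem_primesBelow hp)).tsum_eq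
    _ ≤ rexp (∑' p : Nat.Primes, ‖f p‖) := by
        rw [← Real.exp_sum, Nat.primesBelow]
        gcongr
        exact sum_filter_prime_le_tsum (fun _ _ => norm_nonneg _) hs _

lemma summable_norm (hf : IsExpMultiplicative f) (hf0 : f 0 = 0)
    (hs : Summable fun p : Nat.Primes => ‖f p‖) : Summable fun n => ‖f n‖ :=
  summable_of_sum_range_le (fun _ => norm_nonneg _) (hf.sum_range_norm_le hf0 hs)

theorem tsum_eq_exp (hf : IsExpMultiplicative f) (hf0 : f 0 = 0)
    (hs : Summable fun p : Nat.Primes => ‖f p‖) :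
    ∑' n, f n = NormedSpace.exp (∑' p : Nat.Primes, f p) := by
  have hprod := EulerProduct.eulerProduct_hasProd hf.map_one hf.map_mul_of_coprime
    (hf.summable_norm hf0 hs) hf0
  simp only [fun p : Nat.Primes => (hf.hasSum_prime_pow p.2).tsum_eq] at hprod
  exact hprod.unique hs.of_norm.hasSum.exp

end RCLike

variable {f : ℕ → ℂ}

theorem norm_tsum_eq_tsum_norm_mul_exp (hf : IsExpMultiplicative f) (hf0 : f 0 = 0)
    (hs : Summable fun p : Nat.Primes => ‖f p‖) :
    ‖∑' n, f n‖ = (∑' n, ‖f n‖) * rexp (-∑' p : Nat.Primes, (‖f p‖ - (f p).re)) := by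
  have hre : Summable fun p : Nat.Primes => (f p).re := Complex.reCLM.summable hs.of_norm
  rw [hf.tsum_eq_exp hf0 hs, hf.norm.tsum_eq_exp (by simp [hf0]) (by simpa using hs),
    ← Complex.exp_eq_exp_ℂ, ← Real.exp_eq_exp_ℝ, Complex.norm_exp, ← Real.exp_add,
    Complex.re_tsum hs.of_norm, hs.tsum_sub hre]
  ring_nf

theorem norm_tsum_le_tsum_norm_mul_exp_sum (hf : IsExpMultiplicative f) (hf0 : f 0 = 0)
    (hs : Summable fun p : Nat.Primes => ‖f p‖) (P : Finset ℕ) :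
    ‖∑' n, f n‖ ≤ (∑' n, ‖f n‖) * rexp (-∑ p ∈ P with p.Prime, (‖f p‖ - (f p).re)) := by
  rw [hf.norm_tsum_eq_tsum_norm_mul_exp hf0 hs]
  gcongr
  exact sum_filter_prime_le_tsum (fun p _ => sub_nonneg.mpr (Complex.re_le_norm _))
    (hs.sub (Complex.reCLM.summable hs.of_norm)) P

lemma div_natCast_cpow (hf : IsExpMultiplicative f) (s : ℂ) :
    IsExpMultiplicative fun n => f n / (n : ℂ) ^ s where
  map_mul_of_coprime h := by
    rw [hf.map_mul_of_coprime h, Nat.cast_mul, Complex.natCast_mul_natCast_cpow,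
      div_mul_div_comm]
  map_prime_pow k hp := by
    rw [hf.map_prime_pow k hp, Nat.cast_pow, ← Complex.natCast_cpow_natCast_mul,
      Complex.cpow_nat_mul, div_pow]
    ring

end IsExpMultiplicative

lemma Complex.norm_natCast_cpow_neg_mul_I {n : ℕ} (hn : n ≠ 0) (t : ℝ) :
    ‖(n : ℂ) ^ (-(t * I))‖ = 1 := by
  simp [norm_natCast_cpow_of_pos (Nat.pos_of_ne_zero hn)]

lemma Complex.norm_sub_re_mul_natCast_cpow_neg_mul_I_mem_Icc (c : ℂ) {n : ℕ} (hn : n ≠ 0)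
    (t : ℝ) : ‖c‖ - (c * (n : ℂ) ^ (-(t * I))).re ∈ Set.Icc 0 (2 * ‖c‖) := by
  have hre := abs_re_le_norm (c * (n : ℂ) ^ (-(t * I)))
  rw [norm_mul, norm_natCast_cpow_neg_mul_I hn, mul_one] at hre
  constructor <;> linarith [abs_le.mp hre]

lemma Complex.norm_div_natCast_cpow (c : ℂ) (n : ℕ) {s : ℂ} (hs : s.re ≠ 0) :
    ‖c / (n : ℂ) ^ s‖ = ‖c‖ / (n : ℝ) ^ s.re := by
  rw [norm_div, norm_natCast_cpow_of_re_ne_zero _ hs]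

lemma Complex.norm_sub_re_div_natCast_cpow (c : ℂ) {n : ℕ} (hn : n ≠ 0) (σ t : ℝ) :
    ‖c / (n : ℂ) ^ ((σ : ℂ) + t * I)‖ - (c / (n : ℂ) ^ ((σ : ℂ) + t * I)).re =
      (n : ℝ) ^ (-σ) * (‖c‖ - (c * (n : ℂ) ^ (-(t * I))).re) := by
  have hsplit : c / (n : ℂ) ^ ((σ : ℂ) + t * I) =
      ((n : ℝ) ^ (-σ) : ℝ) * (c * (n : ℂ) ^ (-(t * I))) := by
    rw [cpow_add _ _ (Nat.cast_ne_zero.mpr hn), cpow_neg, Real.rpow_neg (Nat.cast_nonneg n),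
      ofReal_inv, ofReal_cpow (Nat.cast_nonneg n), ofReal_natCast]
    field_simp
  rw [hsplit, norm_mul, norm_mul, norm_natCast_cpow_neg_mul_I hn, re_ofReal_mul, norm_real,
    Real.norm_of_nonneg (by positivity)]
  ring

lemma summable_primes_norm_div_natCast_cpow {g : ℕ → ℂ} {β : ℝ}
    (hgβ : ∀ p, p.Prime → ‖g p‖ ≤ β) {s : ℂ} (hs : 1 < s.re) :
    Summable fun p : Nat.Primes => ‖g p / (p : ℂ) ^ s‖ := by
  refine ((Nat.Primes.summable_rpow.mpr (neg_lt_neg hs)).mul_left β).of_nonneg_of_le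
    (fun _ => norm_nonneg _) fun p => ?_
  rw [Complex.norm_div_natCast_cpow _ _ (by linarith), rpow_neg (Nat.cast_nonneg _),
    ← div_eq_mul_inv]
  exact div_le_div_of_nonneg_right (hgβ p p.2) (by positivity)

theorem stmt5_general (β : ℝ) :
    ∃ C > (0:ℝ), ∀ g : ℕ → ℂ, g 1 = 1 →
      (∀ (p k : ℕ), p.Prime → 1 ≤ k → g (p ^ k) = g p ^ k / (Nat.factorial k : ℂ)) →
      (∀ m n : ℕ, Nat.Coprime m n → g (m * n) = g m * g n) →
      (∀ p : ℕ, p.Prime → ‖g p‖ ≤ β) →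
      ∀ σ t : ℝ, 1 < σ → σ ≤ 2 →
        ‖∑' n : ℕ, g n / (n : ℂ) ^ ((σ : ℂ) + t * Complex.I)‖ ≤
          C * (∑' n : ℕ, ‖g n‖ / (n : ℝ) ^ σ) *
            Real.exp (- ∑ p ∈ (Finset.range (⌊Real.exp (1 / (σ - 1))⌋₊ + 1)).filter Nat.Prime,
              (‖g p‖ - (g p * (p : ℂ) ^ (-(t * Complex.I))).re) / (p : ℝ)) := by
  refine ⟨exp (3 * log 4 * (2 * β)), exp_pos _, fun g hg1 hgpk hgmul hgβ σ t hσ1 hσ2 => ?_⟩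
  have hg : IsExpMultiplicative g := ⟨hgmul _ _, fun {p} k hp => by
    rcases Nat.eq_zero_or_pos k with rfl | hk
    · simp [hg1]
    · exact hgpk p k hp hk⟩
  set s : ℂ := σ + t * Complex.I
  have hs : s.re = σ := by simp [s]
  have hs0 : s ≠ 0 := ne_of_apply_ne Complex.re (by rw [hs, Complex.zero_re]; linarith)
  set E : ℕ → ℝ := fun p => ‖g p‖ - (g p * (p : ℂ) ^ (-(t * Complex.I))).re
  have hE : ∀ p, p.Prime → 0 ≤ E p ∧ E p ≤ 2 * β := fun p hp =>
    have hmem := Complex.norm_sub_re_mul_natCast_cpow_neg_mul_I_mem_Icc (g p) hp.ne_zero t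
    ⟨hmem.1, hmem.2.trans (by linarith [hgβ p hp])⟩
  set P := range (⌊rexp (1 / (σ - 1))⌋₊ + 1)
  have hloss := sum_primes_div_sub_rpow_neg_mul_le hσ1 hσ2 hE
  rw [sum_sub_distrib] at hloss
  calc ‖∑' n : ℕ, g n / (n : ℂ) ^ s‖
      ≤ (∑' n : ℕ, ‖g n / (n : ℂ) ^ s‖) *
          rexp (-∑ p ∈ P with p.Prime, (‖g p / (p : ℂ) ^ s‖ - (g p / (p : ℂ) ^ s).re)) :=
        (hg.div_natCast_cpow s).norm_tsum_le_tsum_norm_mul_exp_sum (by simp [hs0])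
          (summable_primes_norm_div_natCast_cpow hgβ (by linarith)) P
    _ = (∑' n : ℕ, ‖g n‖ / (n : ℝ) ^ σ) * rexp (-∑ p ∈ P with p.Prime, (p : ℝ) ^ (-σ) * E p) := by
        rw [tsum_congr fun n => by rw [Complex.norm_div_natCast_cpow _ _ (by linarith), hs],
          sum_congr rfl fun p hp =>
            Complex.norm_sub_re_div_natCast_cpow _ (mem_filter.mp hp).2.ne_zero σ t]
    _ ≤ exp (3 * log 4 * (2 * β)) * (∑' n : ℕ, ‖g n‖ / (n : ℝ) ^ σ) *
          rexp (-∑ p ∈ P with p.Prime, E p / p) := by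
        rw [mul_comm (exp _), mul_assoc, ← exp_add]
        gcongr
        linarith

theorem stmt5 (β : ℝ) (hβ : 0 < β) :
    ∃ C > (0:ℝ), ∀ g : ℕ → ℂ, g 1 = 1 →
      (∀ (p k : ℕ), p.Prime → 1 ≤ k → g (p ^ k) = g p ^ k / (Nat.factorial k : ℂ)) →
      (∀ m n : ℕ, Nat.Coprime m n → g (m * n) = g m * g n) →
      (∀ p : ℕ, p.Prime → ‖g p‖ ≤ β) →
      ∀ σ t : ℝ, 1 < σ → σ ≤ 2 →
        ‖∑' n : ℕ, g n / (n : ℂ) ^ ((σ : ℂ) + t * Complex.I)‖ ≤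
          C * (∑' n : ℕ, ‖g n‖ / (n : ℝ) ^ σ) *
            Real.exp (- ∑ p ∈ (Finset.range (⌊Real.exp (1 / (σ - 1))⌋₊ + 1)).filter Nat.Prime,
              (‖g p‖ - (g p * (p : ℂ) ^ (-(t * Complex.I))).re) / (p : ℝ)) :=
  stmt5_general β
end

section
/- Let g be a multiplicative function taking values in {−1, 0, 1} defined from real coefficients a_n of a Maass cusp form as sign(a_{p^k}), and suppose ∑_{p ≤ x} |a_p|² / p = log log x + O(1) and ∑_{p ≤ x} |a_p|⁴ / p = 2 log log x + O(1). Then for any real λ > 0, ∑_{p ≤ x, |a_p| ≤ λ} |a_p| / p ≥ λ^{-1}(1 − 2λ^{-2}) log log x + O(1), and in particular with λ = √6, ∑_{p ≤ x} |a_p|/p ≥ (2/(3√6)) log log x + O(1). -/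
open Finset
open scoped Classical

theorem stmt8 (a : ℕ → ℝ)
    (h2 : ∃ C : ℝ, ∀ x : ℝ, Real.exp 1 ≤ x →
      |(∑ p ∈ (Finset.range (⌊x⌋₊ + 1)).filter Nat.Prime, a p ^ 2 / p) -
        Real.log (Real.log x)| ≤ C)
    (h4 : ∃ C : ℝ, ∀ x : ℝ, Real.exp 1 ≤ x →
      |(∑ p ∈ (Finset.range (⌊x⌋₊ + 1)).filter Nat.Prime, a p ^ 4 / p) -
        2 * Real.log (Real.log x)| ≤ C) :
    (∀ l : ℝ, 0 < l → ∃ C : ℝ, ∀ x : ℝ, Real.exp 1 ≤ x →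
      l⁻¹ * (1 - 2 / l ^ 2) * Real.log (Real.log x) - C ≤
        ∑ p ∈ (Finset.range (⌊x⌋₊ + 1)).filter (fun p : ℕ => p.Prime ∧ |a p| ≤ l),
          |a p| / p) ∧
    (∃ C : ℝ, ∀ x : ℝ, Real.exp 1 ≤ x →
      2 / (3 * Real.sqrt 6) * Real.log (Real.log x) - C ≤
        ∑ p ∈ (Finset.range (⌊x⌋₊ + 1)).filter Nat.Prime, |a p| / p) := by
  obtain ⟨C2, hC2⟩ := h2
  obtain ⟨C4, hC4⟩ := h4
  have main : ∀ l : ℝ, 0 < l → ∀ x : ℝ, Real.exp 1 ≤ x →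
      l⁻¹ * (1 - 2 / l ^ 2) * Real.log (Real.log x) - (C2 / l + C4 / l ^ 3) ≤
        ∑ p ∈ (Finset.range (⌊x⌋₊ + 1)).filter (fun p : ℕ => p.Prime ∧ |a p| ≤ l),
          |a p| / p := by
    intro l hl x hx
    set L := Real.log (Real.log x) with hL
    set A := (Finset.range (⌊x⌋₊ + 1)).filter Nat.Prime with hA
    set B := (Finset.range (⌊x⌋₊ + 1)).filter (fun p : ℕ => p.Prime ∧ |a p| ≤ l) with hB
    have hBA : B ⊆ A := by
      intro p hp
      simp only [hA, hB, Finset.mem_filter] at *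
      exact ⟨hp.1, hp.2.1⟩
    set f : ℕ → ℝ := fun p => (a p ^ 2 / l - a p ^ 4 / l ^ 3) / p with hf
    have hl3 : (0:ℝ) < l ^ 3 := pow_pos hl 3
    have key : ∑ p ∈ A, f p ≤ ∑ p ∈ B, |a p| / p := by
      rw [← Finset.sum_sdiff hBA]
      have h1 : ∑ p ∈ A \ B, f p ≤ 0 := by
        apply Finset.sum_nonpos
        intro p hp
        rw [Finset.mem_sdiff] at hp
        have hprime : p.Prime := (Finset.mem_filter.mp hp.1).2
        have hrange : p ∈ Finset.range (⌊x⌋₊ + 1) := (Finset.mem_filter.mp hp.1).1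
        have hnot : ¬ (|a p| ≤ l) := by
          intro hle
          exact hp.2 (Finset.mem_filter.mpr ⟨hrange, hprime, hle⟩)
        have hlt : l < |a p| := lt_of_not_ge hnot
        apply div_nonpos_of_nonpos_of_nonneg
        · rw [sub_nonpos, div_le_div_iff₀ hl hl3]
          have hl2 : l ^ 2 ≤ |a p| ^ 2 := by nlinarith [abs_nonneg (a p)]
          calc a p ^ 2 * l ^ 3 = (a p ^ 2 * l) * l ^ 2 := by ring
            _ ≤ (a p ^ 2 * l) * |a p| ^ 2 := by
                apply mul_le_mul_of_nonneg_left hl2 (by positivity)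
            _ = a p ^ 4 * l := by rw [sq_abs]; ring
        · positivity
      have h2' : ∑ p ∈ B, f p ≤ ∑ p ∈ B, |a p| / p := by
        apply Finset.sum_le_sum
        intro p hp
        have hple : |a p| ≤ l := (Finset.mem_filter.mp hp).2.2
        have hprime : p.Prime := (Finset.mem_filter.mp hp).2.1
        have hppos : (0:ℝ) < p := by exact_mod_cast hprime.pos
        have hnum : a p ^ 2 / l - a p ^ 4 / l ^ 3 ≤ |a p| := by
          have h1 : a p ^ 2 / l ≤ |a p| := by
            rw [div_le_iff₀ hl]
            nlinarith [abs_nonneg (a p), sq_abs (a p)]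
          have h0 : (0:ℝ) ≤ a p ^ 4 / l ^ 3 := by positivity
          linarith
        have hp0 : (0:ℝ) ≤ p := hppos.le
        simp only [hf]
        gcongr
      linarith
    have eq1 : ∑ p ∈ A, f p =
        (∑ p ∈ A, a p ^ 2 / p) / l - (∑ p ∈ A, a p ^ 4 / p) / l ^ 3 := by
      rw [Finset.sum_div, Finset.sum_div, ← Finset.sum_sub_distrib]
      exact Finset.sum_congr rfl fun p _ => by ring
    have hb2 := abs_le.mp (hC2 x hx)
    have hb4 := abs_le.mp (hC4 x hx)
    have i1 : (L - C2) / l ≤ (∑ p ∈ A, a p ^ 2 / p) / l := by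
      gcongr
      linarith [hb2.2, hb2.1]
    have i2 : (∑ p ∈ A, a p ^ 4 / p) / l ^ 3 ≤ (2 * L + C4) / l ^ 3 := by
      gcongr
      linarith [hb4.2]
    have idty : l⁻¹ * (1 - 2 / l ^ 2) * L - (C2 / l + C4 / l ^ 3) =
        (L - C2) / l - (2 * L + C4) / l ^ 3 := by
      field_simp
      ring
    rw [idty]
    calc (L - C2) / l - (2 * L + C4) / l ^ 3
        ≤ (∑ p ∈ A, a p ^ 2 / p) / l - (∑ p ∈ A, a p ^ 4 / p) / l ^ 3 := by linarith
      _ = ∑ p ∈ A, f p := eq1.symm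
      _ ≤ ∑ p ∈ B, |a p| / p := key
  constructor
  · intro l hl
    exact ⟨C2 / l + C4 / l ^ 3, main l hl⟩
  · have h6 : (0:ℝ) < Real.sqrt 6 := Real.sqrt_pos.mpr (by norm_num)
    refine ⟨C2 / Real.sqrt 6 + C4 / Real.sqrt 6 ^ 3, fun x hx => ?_⟩
    have hmain := main (Real.sqrt 6) h6 x hx
    have coef : (Real.sqrt 6)⁻¹ * (1 - 2 / Real.sqrt 6 ^ 2) = 2 / (3 * Real.sqrt 6) := by
      rw [Real.sq_sqrt (by norm_num : (0:ℝ) ≤ 6)]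
      field_simp
      ring
    rw [coef] at hmain
    have hsub : ∑ p ∈ (Finset.range (⌊x⌋₊ + 1)).filter
          (fun p : ℕ => p.Prime ∧ |a p| ≤ Real.sqrt 6), |a p| / p ≤
        ∑ p ∈ (Finset.range (⌊x⌋₊ + 1)).filter Nat.Prime, |a p| / p := by
      apply Finset.sum_le_sum_of_subset_of_nonneg
      · intro p hp
        simp only [Finset.mem_filter] at *
        exact ⟨hp.1, hp.2.1⟩
      · intro p _ _
        positivity
    linarith
end

section
/- Let h be a nonnegative multiplicative function and γ ≥ 0 a real number such that ∑_q h(q) (log q)^γ converges, where q runs over prime powers. Then ∑_{n ≥ 2} h(n) (log n)^γ ≤ exp(4^γ ∑_q h(q) (log q)^γ). -/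
open Finset
open scoped Classical

private lemma aux_sum_le_prod {x : ℕ → ℝ} (s : Finset ℕ) (hx : ∀ i ∈ s, 2 ≤ x i) :
    (∑ i ∈ s, x i ≤ ∏ i ∈ s, x i) ∧ (s.Nonempty → 2 ≤ ∏ i ∈ s, x i) := by
  induction s using Finset.induction_on with
  | empty => simp
  | @insert a s ha ih =>
    have h2a : 2 ≤ x a := hx a (Finset.mem_insert_self _ _)
    obtain ⟨ih1, ih2⟩ := ih (fun i hi => hx i (Finset.mem_insert_of_mem hi))
    rw [Finset.sum_insert ha, Finset.prod_insert ha]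
    rcases s.eq_empty_or_nonempty with rfl | hne
    · simp only [Finset.sum_empty, Finset.prod_empty, add_zero, mul_one]
      exact ⟨le_refl _, fun _ => h2a⟩
    · have h2P := ih2 hne
      exact ⟨by nlinarith, fun _ => by nlinarith⟩

private lemma aux_two_le {n p : ℕ} (hp : p ∈ n.primeFactors) :
    2 ≤ 4 * Real.log ((p ^ n.factorization p : ℕ) : ℝ) := by
  obtain ⟨hpp, hpd, hn0⟩ := Nat.mem_primeFactors.mp hp
  have hk : n.factorization p ≠ 0 := (hpp.factorization_pos_of_dvd hn0 hpd).ne'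
  have h2pk : (2 : ℕ) ≤ p ^ n.factorization p :=
    le_trans hpp.two_le (Nat.le_self_pow hk p)
  have hlog : Real.log 2 ≤ Real.log ((p ^ n.factorization p : ℕ) : ℝ) :=
    Real.log_le_log (by norm_num) (by exact_mod_cast h2pk)
  have := Real.log_two_gt_d9
  linarith

private lemma aux_log_le {n : ℕ} (hn : 2 ≤ n) :
    Real.log n ≤ ∏ p ∈ n.primeFactors, (4 * Real.log ((p ^ n.factorization p : ℕ) : ℝ)) := by
  have hne : n.primeFactors.Nonempty := Nat.nonempty_primeFactors.2 hn
  obtain ⟨hsp, h2p⟩ := aux_sum_le_prod n.primeFactors (fun p hp => aux_two_le hp)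
  have hlog : Real.log n = ∑ p ∈ n.primeFactors, Real.log ((p ^ n.factorization p : ℕ) : ℝ) := by
    rw [Real.log_nat_eq_sum_factorization, Finsupp.sum, Nat.support_factorization]
    refine Finset.sum_congr rfl fun p hp => ?_
    rw [Nat.cast_pow, Real.log_pow]
  have h4 : 4 * Real.log n ≤ ∏ p ∈ n.primeFactors, (4 * Real.log ((p ^ n.factorization p : ℕ) : ℝ)) := by
    rw [hlog, Finset.mul_sum]
    exact hsp
  have hlognn : 0 ≤ Real.log n := Real.log_natCast_nonneg n
  linarith

noncomputable def auxg (h : ℕ → ℝ) (γ : ℝ) : ℕ → ℝ := fun n =>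
  if n = 0 then 0
  else h n * ∏ p ∈ n.primeFactors, (4 * Real.log ((p ^ n.factorization p : ℕ) : ℝ)) ^ γ

private lemma auxg_nonneg {h : ℕ → ℝ} {γ : ℝ} (h0 : ∀ n, 0 ≤ h n) (n : ℕ) :
    0 ≤ auxg h γ n := by
  unfold auxg
  split
  · exact le_refl _
  · exact mul_nonneg (h0 n) (Finset.prod_nonneg fun p hp =>
      Real.rpow_nonneg (by linarith [aux_two_le hp]) γ)

private lemma auxg_one {h : ℕ → ℝ} {γ : ℝ} (h1 : h 1 = 1) : auxg h γ 1 = 1 := by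
  simp [auxg, h1]

private lemma auxg_mul {h : ℕ → ℝ} {γ : ℝ}
    (hm : ∀ m n : ℕ, Nat.Coprime m n → h (m * n) = h m * h n)
    {a b : ℕ} (hab : Nat.Coprime a b) : auxg h γ (a * b) = auxg h γ a * auxg h γ b := by
  rcases eq_or_ne a 0 with rfl | ha0
  · have hb1 : b = 1 := by simpa [Nat.coprime_zero_left] using hab
    subst hb1
    simp [auxg]
  rcases eq_or_ne b 0 with rfl | hb0
  · have ha1 : a = 1 := by simpa [Nat.coprime_zero_right] using hab
    subst ha1
    simp [auxg]
  have hab0 : a * b ≠ 0 := mul_ne_zero ha0 hb0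
  have key : ∀ (c d : ℕ), c ≠ 0 → d ≠ 0 → Nat.Coprime c d → ∀ p ∈ c.primeFactors,
      (c * d).factorization p = c.factorization p := by
    intro c d hc hd hcd p hp
    have hpd : p ∉ d.primeFactors :=
      Finset.disjoint_left.mp (Nat.Coprime.disjoint_primeFactors hcd) hp
    have hd0 : d.factorization p = 0 := by
      rw [← Finsupp.notMem_support_iff, Nat.support_factorization]
      exact hpd
    rw [Nat.factorization_mul hc hd, Finsupp.add_apply, hd0, add_zero]
  simp only [auxg, if_neg ha0, if_neg hb0, if_neg hab0]
  rw [hm a b hab, Nat.Coprime.primeFactors_mul hab,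
    Finset.prod_union (Nat.Coprime.disjoint_primeFactors hab)]
  have e1 : ∏ p ∈ a.primeFactors, (4 * Real.log ((p ^ (a * b).factorization p : ℕ) : ℝ)) ^ γ
      = ∏ p ∈ a.primeFactors, (4 * Real.log ((p ^ a.factorization p : ℕ) : ℝ)) ^ γ :=
    Finset.prod_congr rfl fun p hp => by rw [key a b ha0 hb0 hab p hp]
  have e2 : ∏ p ∈ b.primeFactors, (4 * Real.log ((p ^ (a * b).factorization p : ℕ) : ℝ)) ^ γ
      = ∏ p ∈ b.primeFactors, (4 * Real.log ((p ^ b.factorization p : ℕ) : ℝ)) ^ γ :=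
    Finset.prod_congr rfl fun p hp => by rw [mul_comm a b, key b a hb0 ha0 hab.symm p hp]
  rw [e1, e2]
  ring

private lemma auxg_primePow {h : ℕ → ℝ} {γ : ℝ} {p k : ℕ} (hp : p.Prime) (hk : k ≠ 0) :
    auxg h γ (p ^ k) = 4 ^ γ * (h (p ^ k) * Real.log ((p ^ k : ℕ) : ℝ) ^ γ) := by
  have hne : p ^ k ≠ 0 := (pow_pos hp.pos k).ne'
  rw [auxg]
  rw [if_neg hne, Nat.primeFactors_prime_pow hk hp, Finset.prod_singleton]
  have hfact : (p ^ k).factorization p = k := by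
    rw [hp.factorization_pow]
    simp
  rw [hfact, Real.mul_rpow (by norm_num) (Real.log_natCast_nonneg _)]
  ring

theorem stmt11 (h : ℕ → ℝ) (h0 : ∀ n, 0 ≤ h n) (h1 : h 1 = 1)
    (hm : ∀ m n : ℕ, Nat.Coprime m n → h (m * n) = h m * h n)
    (γ : ℝ) (hγ : 0 ≤ γ)
    (hs : Summable (fun q : ℕ => if IsPrimePow q then h q * Real.log q ^ γ else 0)) :
    (∑' n : ℕ, if 2 ≤ n then h n * Real.log n ^ γ else 0) ≤
      Real.exp ((4 : ℝ) ^ γ *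
        ∑' q : ℕ, if IsPrimePow q then h q * Real.log q ^ γ else 0) := by
  classical
  set u : ℕ → ℝ := fun q : ℕ => if IsPrimePow q then h q * Real.log q ^ γ else 0 with hu
  have hunn : ∀ q, 0 ≤ u q := by
    intro q
    rw [hu]
    dsimp only
    split
    · exact mul_nonneg (h0 q) (Real.rpow_nonneg (Real.log_natCast_nonneg q) γ)
    · exact le_refl _
  have hg1 : auxg h γ 1 = 1 := auxg_one h1
  have hgmul : ∀ {a b : ℕ}, Nat.Coprime a b → auxg h γ (a * b) = auxg h γ a * auxg h γ b :=
    fun hab => auxg_mul hm hab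
  have hgnn : ∀ n, 0 ≤ auxg h γ n := auxg_nonneg h0
  -- pointwise comparison for n ≥ 2
  have hfg : ∀ n : ℕ, 2 ≤ n → h n * Real.log n ^ γ ≤ auxg h γ n := by
    intro n hn
    have hn0 : n ≠ 0 := by omega
    rw [auxg, if_neg hn0]
    refine mul_le_mul_of_nonneg_left ?_ (h0 n)
    rw [Real.finset_prod_rpow _ _ (fun p hp => by linarith [aux_two_le hp]) γ]
    exact Real.rpow_le_rpow (Real.log_natCast_nonneg n) (aux_log_le hn) hγ
  -- summability of g at powers of each prime
  have hgsum : ∀ {p : ℕ}, p.Prime → Summable (fun e : ℕ => ‖auxg h γ (p ^ e)‖) := by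
    intro p hp
    have hinj : Function.Injective (fun e : ℕ => p ^ (e + 1)) := fun a b hab =>
      Nat.succ_injective (Nat.pow_right_injective hp.two_le hab)
    have h1s : Summable (fun e : ℕ => auxg h γ (p ^ (e + 1))) := by
      have hsc : Summable (fun e : ℕ => (4 : ℝ) ^ γ * u (p ^ (e + 1))) :=
        (hs.comp_injective hinj).mul_left _
      refine hsc.congr fun e => ?_
      have hq : IsPrimePow (p ^ (e + 1)) := ⟨p, e + 1, hp.prime, e.succ_pos, rfl⟩
      rw [hu]
      dsimp only
      rw [if_pos hq, auxg_primePow hp e.succ_ne_zero]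
    have h2s : Summable (fun e : ℕ => auxg h γ (p ^ e)) := (summable_nat_add_iff 1).mp h1s
    exact h2s.congr fun e => (Real.norm_of_nonneg (hgnn _)).symm
  -- the dominating prime-power function
  set G : ℕ → ℝ := fun q => (4 : ℝ) ^ γ * u q with hG
  have hGsum : Summable G := hs.mul_left _
  have hGnn : ∀ q, 0 ≤ G q := fun q =>
    mul_nonneg (Real.rpow_nonneg (by norm_num) γ) (hunn q)
  have hGpp : ∀ {p k : ℕ}, p.Prime → k ≠ 0 → G (p ^ k) = auxg h γ (p ^ k) := by
    intro p k hp hk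
    have hq : IsPrimePow (p ^ k) := ⟨p, k, hp.prime, Nat.pos_of_ne_zero hk, rfl⟩
    rw [hG, hu]
    dsimp only
    rw [if_pos hq, auxg_primePow hp hk]
  have hGt : ∑' q, G q = (4 : ℝ) ^ γ * ∑' q, u q := tsum_mul_left
  -- the key finite-sum bound
  have key : ∀ s : Finset ℕ,
      ∑ n ∈ s, (if 2 ≤ n then h n * Real.log n ^ γ else 0) ≤
        Real.exp ((4 : ℝ) ^ γ * ∑' q, u q) := by
    intro s
    set N : ℕ := s.sup id + 1 with hN
    obtain ⟨hsmn, hsms⟩ :=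
      EulerProduct.summable_and_hasSum_smoothNumbers_prod_primesBelow_tsum
        hg1 hgmul hgsum N
    have hind : HasSum (Set.indicator (↑N.smoothNumbers) (auxg h γ))
        (∏ p ∈ N.primesBelow, ∑' e : ℕ, auxg h γ (p ^ e)) :=
      hasSum_subtype_iff_indicator.mp hsms
    have step1 : ∑ n ∈ s, (if 2 ≤ n then h n * Real.log n ^ γ else 0)
        ≤ ∑ n ∈ s, Set.indicator (↑N.smoothNumbers) (auxg h γ) n := by
      refine Finset.sum_le_sum fun n hn => ?_
      by_cases h2n : 2 ≤ n
      · rw [if_pos h2n]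
        have hmem : n ∈ N.smoothNumbers := by
          refine Nat.mem_smoothNumbers'.mpr fun p pp hpn => ?_
          have hple : p ≤ n := Nat.le_of_dvd (by omega) hpn
          have hns : n ≤ s.sup id := Finset.le_sup (f := id) hn
          omega
        rw [Set.indicator_of_mem hmem]
        exact hfg n h2n
      · rw [if_neg h2n]
        exact Set.indicator_nonneg (fun q _ => hgnn q) n
    have step2 : ∑ n ∈ s, Set.indicator (↑N.smoothNumbers) (auxg h γ) n
        ≤ ∏ p ∈ N.primesBelow, ∑' e : ℕ, auxg h γ (p ^ e) := by
      have hle := Summable.sum_le_tsum s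
        (fun n _ => Set.indicator_nonneg (fun q _ => hgnn q) n) hind.summable
      rwa [hind.tsum_eq] at hle
    have hsump : ∀ p ∈ N.primesBelow, Summable (fun e : ℕ => auxg h γ (p ^ e)) :=
      fun p hp => (hgsum (Nat.prime_of_mem_primesBelow hp)).of_norm
    have step3 : ∏ p ∈ N.primesBelow, ∑' e : ℕ, auxg h γ (p ^ e)
        ≤ Real.exp (∑ p ∈ N.primesBelow, ∑' e : ℕ, auxg h γ (p ^ (e + 1))) := by
      rw [Real.exp_sum]
      refine Finset.prod_le_prod (fun p hp => tsum_nonneg fun e => hgnn _)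
        (fun p hp => ?_)
      rw [Summable.tsum_eq_zero_add (hsump p hp), pow_zero, hg1]
      calc 1 + ∑' e : ℕ, auxg h γ (p ^ (e + 1))
          = (∑' e : ℕ, auxg h γ (p ^ (e + 1))) + 1 := by ring
        _ ≤ Real.exp (∑' e : ℕ, auxg h γ (p ^ (e + 1))) := Real.add_one_le_exp _
    have step4 : ∑ p ∈ N.primesBelow, ∑' e : ℕ, auxg h γ (p ^ (e + 1)) ≤ ∑' q, G q := by
      set W : ℕ → ℕ → ℝ :=
        fun p q => Set.indicator (Set.range fun e : ℕ => p ^ (e + 1)) G q with hW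
      have hWle : ∀ p q, W p q ≤ G q := fun p q =>
        Set.indicator_le_self' (fun x _ => hGnn x) q
      have hWnn : ∀ p q, 0 ≤ W p q := fun p q =>
        Set.indicator_nonneg (fun x _ => hGnn x) q
      have hWsum : ∀ p, Summable (W p) := fun p =>
        Summable.of_nonneg_of_le (hWnn p) (fun q => hWle p q) hGsum
      have hTW : ∀ p ∈ N.primesBelow,
          (∑' e : ℕ, auxg h γ (p ^ (e + 1))) = ∑' q, W p q := by
        intro p hp
        have hpp := Nat.prime_of_mem_primesBelow hp
        have hinj : Function.Injective (fun e : ℕ => p ^ (e + 1)) := fun a b hab =>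
          Nat.succ_injective (Nat.pow_right_injective hpp.two_le hab)
        have hside : ∀ q, q ∉ Set.range (fun e : ℕ => p ^ (e + 1)) → W p q = 0 :=
          fun q hq => Set.indicator_of_notMem hq _
        rw [← Function.Injective.tsum_eq hinj (f := W p)
          (Function.support_subset_iff'.mpr hside)]
        refine tsum_congr fun e => ?_
        have hmem : p ^ (e + 1) ∈ Set.range (fun e : ℕ => p ^ (e + 1)) := ⟨e, rfl⟩
        rw [hW]
        dsimp only
        rw [Set.indicator_of_mem hmem, hGpp hpp e.succ_ne_zero]
      rw [Finset.sum_congr rfl hTW, ← Summable.tsum_finsetSum (fun p _ => hWsum p)]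
      refine Summable.tsum_le_tsum (fun q => ?_) (summable_sum fun p _ => hWsum p) hGsum
      by_cases hex : ∃ p0 ∈ N.primesBelow, W p0 q ≠ 0
      · obtain ⟨p0, hp0, hne⟩ := hex
        have hq0 : q ∈ Set.range (fun e : ℕ => p0 ^ (e + 1)) := by
          by_contra hc
          exact hne (Set.indicator_of_notMem hc _)
        have hpp0 := Nat.prime_of_mem_primesBelow hp0
        rw [Finset.sum_eq_single_of_mem p0 hp0 ?_]
        · rw [hW]
          dsimp only
          rw [Set.indicator_of_mem hq0]
        · intro p hp hpne
          rw [hW]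
          dsimp only
          refine Set.indicator_of_notMem ?_ _
          rintro ⟨e, he⟩
          obtain ⟨e0, he0⟩ := hq0
          dsimp only at he he0
          have hpp := Nat.prime_of_mem_primesBelow hp
          have hdvd : p ∣ p0 ^ (e0 + 1) := by
            rw [he0, ← he]
            exact dvd_pow_self p e.succ_ne_zero
          have : p = p0 :=
            (Nat.prime_dvd_prime_iff_eq hpp hpp0).mp (hpp.dvd_of_dvd_pow hdvd)
          exact hpne this
      · push_neg at hex
        rw [Finset.sum_eq_zero hex]
        exact hGnn q
    calc ∑ n ∈ s, (if 2 ≤ n then h n * Real.log n ^ γ else 0)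
        ≤ ∏ p ∈ N.primesBelow, ∑' e : ℕ, auxg h γ (p ^ e) := step1.trans step2
      _ ≤ Real.exp (∑ p ∈ N.primesBelow, ∑' e : ℕ, auxg h γ (p ^ (e + 1))) := step3
      _ ≤ Real.exp ((4 : ℝ) ^ γ * ∑' q, u q) := by
          rw [Real.exp_le_exp, ← hGt]
          exact step4
  have hF0 : ∀ n : ℕ, 0 ≤ (if 2 ≤ n then h n * Real.log n ^ γ else 0) := by
    intro n
    split
    · exact mul_nonneg (h0 n) (Real.rpow_nonneg (Real.log_natCast_nonneg n) γ)
    · exact le_refl _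
  have hFsum : Summable (fun n : ℕ => if 2 ≤ n then h n * Real.log n ^ γ else 0) :=
    summable_of_sum_le hF0 key
  exact Summable.tsum_le_of_sum_le hFsum key
end

section
/- Let g be a multiplicative function with |g(p)| ≤ β on primes, let g₁ be the exponentially multiplicative function with g₁(p) = g(p), and define g₂ by the Dirichlet convolution identity g = g₁ * g₂. Then g₂ is multiplicative with g₂(p) = 0 and g₂(p^k) = ∑_{r=0}^{k} (−g(p))^r g(p^{k−r}) / r! for k ≥ 2. -/
/-!
Let `E_a` be the exponentially multiplicative function with `E_a(p^k) = a(p)^k / k!`. At a prime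
power, the Dirichlet product `E_a * E_b` is the `k`-th coefficient of `e^{a X} e^{b X}`, so
`E_a * E_b = E_{a+b}` and `E_{-g}` is the Dirichlet inverse of `g₁ = E_g`. Hence
`g₂ = E_{-g} * g` is multiplicative, and evaluating this product at `p^k` gives the formula; for
`k = 1` it is `g(p) - g(p) = 0`.
-/

open Finset

theorem sum_range_pow_div_factorial_mul {K : Type*} [Field K] [CharZero K] (a b : K) (k : ℕ) :
    ∑ i ∈ range (k + 1), a ^ i / i.factorial * (b ^ (k - i) / (k - i).factorial)
      = (a + b) ^ k / k.factorial := by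
  rw [add_pow, sum_div]
  refine sum_congr rfl fun i hi => ?_
  rw [Nat.cast_choose K (Nat.lt_succ_iff.1 (mem_range.1 hi))]
  field_simp
  rw [mul_div_mul_right _ _ (Nat.cast_ne_zero.2 k.factorial_ne_zero)]

namespace ArithmeticFunction

variable {R K : Type*}

def ofFun [Zero R] (f : ℕ → R) : ArithmeticFunction R :=
  ⟨fun n => if n = 0 then 0 else f n, rfl⟩

theorem ofFun_apply [Zero R] (f : ℕ → R) {n : ℕ} (hn : n ≠ 0) : ofFun f n = f n :=
  if_neg hn

theorem isMultiplicative_ofFun_iff [MonoidWithZero R] {f : ℕ → R} :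
    (ofFun f).IsMultiplicative ↔ f 1 = 1 ∧ ∀ m n : ℕ, m.Coprime n → f (m * n) = f m * f n := by
  rw [IsMultiplicative.iff_ne_zero, ofFun_apply f one_ne_zero]
  refine and_congr_right fun h1 => ⟨fun hmul m n hmn => ?_, fun hmul m n hm hn hmn => ?_⟩
  · rcases eq_or_ne m 0 with rfl | hm
    · rw [(Nat.coprime_zero_left n).1 hmn, mul_one, h1, mul_one]
    rcases eq_or_ne n 0 with rfl | hn
    · rw [(Nat.coprime_zero_right m).1 hmn, one_mul, h1, one_mul]
    simpa only [ofFun_apply f, hm, hn, mul_ne_zero, ne_eq, not_false_eq_true] using hmul hm hn hmn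
  · rw [ofFun_apply f hm, ofFun_apply f hn, ofFun_apply f (mul_ne_zero hm hn), hmul m n hmn]

theorem ofFun_mul_ofFun_apply [Semiring R] (f h : ℕ → R) (n : ℕ) :
    (ofFun f * ofFun h) n = ∑ d ∈ n.divisors, f d * h (n / d) := by
  rw [mul_apply, ← Nat.sum_divisorsAntidiagonal fun d e => f d * h e]
  refine sum_congr rfl fun x hx => ?_
  rw [ofFun_apply f (Nat.pos_of_mem_divisors (Nat.fst_mem_divisors_of_mem_antidiagonal hx)).ne',
    ofFun_apply h (Nat.pos_of_mem_divisors (Nat.snd_mem_divisors_of_mem_antidiagonal hx)).ne']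

theorem ofFun_eq_ofFun_mul_ofFun [Semiring R] {f f₁ f₂ : ℕ → R}
    (h : ∀ n : ℕ, 1 ≤ n → f n = ∑ d ∈ n.divisors, f₁ d * f₂ (n / d)) :
    ofFun f = ofFun f₁ * ofFun f₂ := by
  ext n
  rw [ofFun_mul_ofFun_apply]
  rcases eq_or_ne n 0 with rfl | hn
  · simp [ofFun]
  · rw [ofFun_apply f hn, h n (Nat.one_le_iff_ne_zero.2 hn)]

theorem mul_apply_prime_pow [Semiring R] (f h : ArithmeticFunction R) {p : ℕ} (hp : p.Prime)
    (k : ℕ) : (f * h) (p ^ k) = ∑ i ∈ range (k + 1), f (p ^ i) * h (p ^ (k - i)) := by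
  rw [mul_apply, Nat.sum_divisorsAntidiagonal fun d e => f d * h e, Nat.sum_divisors_prime_pow hp]
  refine sum_congr rfl fun i hi => ?_
  rw [Nat.pow_div (Nat.lt_succ_iff.1 (mem_range.1 hi)) hp.pos]

section ExpMult

variable [Field K]

noncomputable def expMult (a : ℕ → K) : ArithmeticFunction K :=
  ofFun fun n => n.factorization.prod fun p k => a p ^ k / k.factorial

theorem expMult_apply_prime_pow (a : ℕ → K) {p : ℕ} (hp : p.Prime) (k : ℕ) :
    expMult a (p ^ k) = a p ^ k / k.factorial := by
  rw [expMult, ofFun_apply _ (pow_ne_zero k hp.ne_zero), hp.factorization_pow,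
    Finsupp.prod_single_index (by simp)]

theorem isMultiplicative_expMult (a : ℕ → K) : (expMult a).IsMultiplicative := by
  refine isMultiplicative_ofFun_iff.2 ⟨by simp, fun m n hmn => ?_⟩
  rw [Nat.factorization_mul_of_coprime hmn]
  apply Finsupp.prod_add_index_of_disjoint
  simpa only [Nat.support_factorization] using hmn.disjoint_primeFactors

theorem expMult_mul_expMult [CharZero K] (a b : ℕ → K) :
    expMult a * expMult b = expMult (a + b) := by
  refine (IsMultiplicative.eq_iff_eq_on_prime_powers _
    ((isMultiplicative_expMult a).mul (isMultiplicative_expMult b)) _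
    (isMultiplicative_expMult _)).2 fun p k hp => ?_
  simp only [mul_apply_prime_pow _ _ hp, expMult_apply_prime_pow _ hp, Pi.add_apply,
    sum_range_pow_div_factorial_mul]

theorem expMult_zero : expMult (0 : ℕ → K) = 1 := by
  refine (IsMultiplicative.eq_iff_eq_on_prime_powers _ (isMultiplicative_expMult 0) _
    isMultiplicative_one).2 fun p k hp => ?_
  rw [expMult_apply_prime_pow _ hp]
  rcases eq_or_ne k 0 with rfl | hk
  · simp
  · rw [one_apply_ne (by simpa using (Nat.one_lt_pow hk hp.one_lt).ne'), Pi.zero_apply,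
      zero_pow hk, zero_div]

theorem expMult_neg_mul_expMult [CharZero K] (a : ℕ → K) : expMult (-a) * expMult a = 1 := by
  rw [expMult_mul_expMult, neg_add_cancel, expMult_zero]

theorem ofFun_eq_expMult {f a : ℕ → K} (hf : (ofFun f).IsMultiplicative)
    (hpow : ∀ p k : ℕ, p.Prime → 1 ≤ k → f (p ^ k) = a p ^ k / k.factorial) :
    ofFun f = expMult a := by
  refine (IsMultiplicative.eq_iff_eq_on_prime_powers _ hf _ (isMultiplicative_expMult a)).2
    fun p k hp => ?_
  rcases eq_or_ne k 0 with rfl | hk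
  · rw [pow_zero, hf.map_one, (isMultiplicative_expMult a).map_one]
  · rw [ofFun_apply _ (pow_ne_zero k hp.ne_zero), expMult_apply_prime_pow _ hp,
      hpow p k hp (Nat.one_le_iff_ne_zero.2 hk)]

end ExpMult

end ArithmeticFunction

open ArithmeticFunction

theorem stmt12_general (g g₁ g₂ : ℕ → ℂ)
    (hg1 : g 1 = 1) (hgm : ∀ m n : ℕ, Nat.Coprime m n → g (m * n) = g m * g n)
    (hg₁1 : g₁ 1 = 1)
    (hg₁m : ∀ m n : ℕ, Nat.Coprime m n → g₁ (m * n) = g₁ m * g₁ n)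
    (hg₁p : ∀ (p k : ℕ), p.Prime → 1 ≤ k → g₁ (p ^ k) = g p ^ k / (Nat.factorial k : ℂ))
    (hconv : ∀ n : ℕ, 1 ≤ n → g n = ∑ d ∈ n.divisors, g₁ d * g₂ (n / d)) :
    (g₂ 1 = 1 ∧ ∀ m n : ℕ, Nat.Coprime m n → g₂ (m * n) = g₂ m * g₂ n) ∧
    (∀ p : ℕ, p.Prime → g₂ p = 0) ∧
    (∀ (p k : ℕ), p.Prime → 2 ≤ k →
      g₂ (p ^ k) = ∑ r ∈ Finset.range (k + 1),
        (-(g p)) ^ r * g (p ^ (k - r)) / (Nat.factorial r : ℂ)) := by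
  have hg₂_eq : ofFun g₂ = expMult (-g) * ofFun g := by
    rw [ofFun_eq_ofFun_mul_ofFun hconv,
      ofFun_eq_expMult (isMultiplicative_ofFun_iff.2 ⟨hg₁1, hg₁m⟩) hg₁p, ← mul_assoc,
      expMult_neg_mul_expMult, one_mul]
  have hg₂_prime_pow : ∀ p k : ℕ, p.Prime → g₂ (p ^ k) = ∑ r ∈ Finset.range (k + 1),
      (-(g p)) ^ r * g (p ^ (k - r)) / (Nat.factorial r : ℂ) := by
    intro p k hp
    rw [← ofFun_apply g₂ (pow_ne_zero k hp.ne_zero), hg₂_eq, mul_apply_prime_pow _ _ hp]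
    refine Finset.sum_congr rfl fun r _ => ?_
    rw [expMult_apply_prime_pow _ hp, ofFun_apply g (pow_ne_zero _ hp.ne_zero), Pi.neg_apply,
      div_mul_eq_mul_div]
  refine ⟨isMultiplicative_ofFun_iff.1 ?_, fun p hp => ?_, fun p k hp _ => hg₂_prime_pow p k hp⟩
  · rw [hg₂_eq]
    exact (isMultiplicative_expMult _).mul (isMultiplicative_ofFun_iff.2 ⟨hg1, hgm⟩)
  · simpa [Finset.sum_range_succ, hg1] using hg₂_prime_pow p 1 hp

theorem stmt12 (g g₁ g₂ : ℕ → ℂ) (β : ℝ)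
    (hg1 : g 1 = 1) (hgm : ∀ m n : ℕ, Nat.Coprime m n → g (m * n) = g m * g n)
    (hgb : ∀ p : ℕ, p.Prime → ‖g p‖ ≤ β)
    (hg₁1 : g₁ 1 = 1)
    (hg₁m : ∀ m n : ℕ, Nat.Coprime m n → g₁ (m * n) = g₁ m * g₁ n)
    (hg₁p : ∀ (p k : ℕ), p.Prime → 1 ≤ k → g₁ (p ^ k) = g p ^ k / (Nat.factorial k : ℂ))
    (hconv : ∀ n : ℕ, 1 ≤ n → g n = ∑ d ∈ n.divisors, g₁ d * g₂ (n / d)) :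
    (g₂ 1 = 1 ∧ ∀ m n : ℕ, Nat.Coprime m n → g₂ (m * n) = g₂ m * g₂ n) ∧
    (∀ p : ℕ, p.Prime → g₂ p = 0) ∧
    (∀ (p k : ℕ), p.Prime → 2 ≤ k →
      g₂ (p ^ k) = ∑ r ∈ Finset.range (k + 1),
        (-(g p)) ^ r * g (p ^ (k - r)) / (Nat.factorial r : ℂ)) :=
  stmt12_general g g₁ g₂ hg1 hgm hg₁1 hg₁m hg₁p hconv
end

section
/- Define the sequence b₁ = 3/2, b_{n+1} = b_n(1 + 1/log b_n). Then (b_n) is strictly increasing and unbounded, and log b_n ∼ √(2n) as n → ∞ (in particular b_n → ∞). -/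
/-!
Since `log x < x`, each step adds `b / log b > 1`, so `b n > n`. Writing `L n = log (b n)`,
the recursion reads `L (n + 1) = L n + log (1 + 1 / L n)`, hence
`L (n + 1) ^ 2 - L n ^ 2 = 2 L log (1 + 1 / L) + log (1 + 1 / L) ^ 2 → 2` as `L → ∞`,
and Cesàro averaging of these increments gives `L n ^ 2 / n → 2`.
-/

open Real Filter Topology Finset

theorem Real.one_lt_div_log {x : ℝ} (hx : 1 < x) : 1 < x / log x := by
  have hlog : 0 < log x := log_pos hx
  rw [one_lt_div hlog]
  linarith [log_le_sub_one_of_pos (by linarith : 0 < x)]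

theorem Real.tendsto_add_log_one_add_inv_sq_sub_sq :
    Tendsto (fun x : ℝ => (x + log (1 + 1 / x)) ^ 2 - x ^ 2) atTop (𝓝 2) := by
  have hmul : Tendsto (fun x : ℝ => x * log (1 + 1 / x)) atTop (𝓝 1) :=
    tendsto_mul_log_one_add_div_atTop 1
  have hlog : Tendsto (fun x : ℝ => log (1 + 1 / x)) atTop (𝓝 0) := by
    have h : Tendsto (fun x : ℝ => 1 + 1 / x) atTop (𝓝 (1 + 0)) := by
      simpa only [one_div] using tendsto_inv_atTop_zero.const_add 1
    simpa using h.log (by norm_num)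
  convert (hmul.const_mul 2).add (hlog.pow 2) using 1
  · ext x
    ring
  · norm_num

theorem tendsto_div_natCast_of_tendsto_sub {u : ℕ → ℝ} {l : ℝ}
    (h : Tendsto (fun n => u (n + 1) - u n) atTop (𝓝 l)) :
    Tendsto (fun n : ℕ => u n / n) atTop (𝓝 l) := by
  have hmean : Tendsto (fun n : ℕ => (n : ℝ)⁻¹ * (u n - u 0)) atTop (𝓝 l) := by
    simpa only [sum_range_sub] using h.cesaro
  have hinit : Tendsto (fun n : ℕ => (n : ℝ)⁻¹ * u 0) atTop (𝓝 0) := by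
    simpa using (tendsto_inv_atTop_zero.comp tendsto_natCast_atTop_atTop).mul_const (u 0)
  simpa [div_eq_inv_mul, mul_sub] using hmean.add hinit

namespace LogRecursion

variable {b : ℕ → ℝ} (hrec : ∀ n : ℕ, 1 ≤ n → b (n + 1) = b n * (1 + 1 / log (b n)))
include hrec

theorem add_one_lt_succ {n : ℕ} (hn : 1 ≤ n) (hb : 1 < b n) : b n + 1 < b (n + 1) := by
  have h : b (n + 1) = b n + b n / log (b n) := by
    rw [hrec n hn, mul_add, mul_one, mul_one_div]
  linarith [one_lt_div_log hb]

variable (hb1 : 1 < b 1)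
include hb1

theorem natCast_lt {n : ℕ} (hn : 1 ≤ n) : (n : ℝ) < b n := by
  induction n, hn using Nat.le_induction with
  | base => exact_mod_cast hb1
  | succ n hn ih =>
    have hb : 1 < b n := lt_of_le_of_lt (by exact_mod_cast hn) ih
    push_cast
    linarith [add_one_lt_succ hrec hn hb]

theorem one_lt {n : ℕ} (hn : 1 ≤ n) : 1 < b n :=
  lt_of_le_of_lt (by exact_mod_cast hn) (natCast_lt hrec hb1 hn)

theorem lt_succ {n : ℕ} (hn : 1 ≤ n) : b n < b (n + 1) := by
  linarith [add_one_lt_succ hrec hn (one_lt hrec hb1 hn)]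

theorem tendsto_atTop : Tendsto b atTop atTop := by
  refine tendsto_atTop_mono' atTop ?_ tendsto_natCast_atTop_atTop
  filter_upwards [eventually_ge_atTop 1] with n hn
  exact (natCast_lt hrec hb1 hn).le

theorem log_succ {n : ℕ} (hn : 1 ≤ n) :
    log (b (n + 1)) = log (b n) + log (1 + 1 / log (b n)) := by
  have hb := one_lt hrec hb1 hn
  have hlog : 0 < log (b n) := log_pos hb
  rw [hrec n hn, log_mul (by linarith) (by positivity)]

theorem tendsto_log_sq_div_natCast :
    Tendsto (fun n : ℕ => log (b n) ^ 2 / n) atTop (𝓝 2) := by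
  apply tendsto_div_natCast_of_tendsto_sub
  have hL : Tendsto (fun n => log (b n)) atTop atTop :=
    tendsto_log_atTop.comp (tendsto_atTop hrec hb1)
  refine (tendsto_add_log_one_add_inv_sq_sub_sq.comp hL).congr' ?_
  filter_upwards [eventually_ge_atTop 1] with n hn
  simp only [Function.comp_apply, log_succ hrec hb1 hn]

end LogRecursion

theorem stmt15 (b : ℕ → ℝ) (hb1 : b 1 = 3 / 2)
    (hrec : ∀ n : ℕ, 1 ≤ n → b (n + 1) = b n * (1 + 1 / Real.log (b n))) :
    (∀ n : ℕ, 1 ≤ n → b n < b (n + 1)) ∧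
    Filter.Tendsto b Filter.atTop Filter.atTop ∧
    Filter.Tendsto (fun n : ℕ => Real.log (b n) / Real.sqrt (2 * n))
      Filter.atTop (nhds 1) := by
  have h1 : 1 < b 1 := by rw [hb1]; norm_num
  refine ⟨fun n hn => LogRecursion.lt_succ hrec h1 hn, LogRecursion.tendsto_atTop hrec h1, ?_⟩
  have hsq : Tendsto (fun n : ℕ => log (b n) ^ 2 / n / 2) atTop (𝓝 1) := by
    simpa using (LogRecursion.tendsto_log_sq_div_natCast hrec h1).div_const 2
  have hsqrt := (continuous_sqrt.tendsto 1).comp hsq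
  rw [sqrt_one] at hsqrt
  refine hsqrt.congr' ?_
  filter_upwards [eventually_ge_atTop 1] with n hn
  have hL : 0 ≤ log (b n) := (log_pos (LogRecursion.one_lt hrec h1 hn)).le
  rw [Function.comp_apply, div_div, mul_comm, sqrt_div' _ (by positivity), sqrt_sq hL]
end
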